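/- arXiv:2003.02935 — 5 statements merged into one kernel-verified Lean document; each statement's English description precedes it below -/
import Mathlib

section
/- Let F: K → L be an exact functor of triangulated categories. (a) If F admits a right adjoint U: L → K, then U(L) is F-injective for every L ∈ L, the unit of adjunction η: X → UF(X) is an F-monomorphism for every X ∈ K, there are enough F-injectives, and the class of F-injectives equals add(U(L) | L ∈ L). (b) If F admits a left adjoint V: L → K, then V(L) is F-projective for every L ∈ L, the counit ε: VF(X) → X is an F-epimorphism for every X ∈ K, there are enough F-projectives, and the class of F-projectives equals add(V(L) | L ∈ L). -/
/-!
Common definitions for formalizing "Relative stable categories and birationality"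
(Balmer–Stevenson): proper classes of triangles in the sense of Beligiannis,
relative projectives/injectives, Frobenius classes, and abstract models of the
relative stable category together with Beligiannis' triangulation.
-/

noncomputable section

open CategoryTheory Limits Pretriangulated ZeroObject

universe v u v' u' v'' u'' v₁ u₁ v₂ u₂

namespace RelStable

variable {K : Type u} [Category.{v} K] [Preadditive K] [HasZeroObject K]
  [HasShift K ℤ] [∀ n : ℤ, (CategoryTheory.shiftFunctor K n).Additive] [Pretriangulated K]

/-- `f` is an `E`-monomorphism: it occurs as the first map of a triangle in `E`. -/
def SMono (E : Set (Triangle K)) {X Y : K} (f : X ⟶ Y) : Prop :=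
  ∃ (Z : K) (g : Y ⟶ Z) (h : Z ⟶ X⟦(1:ℤ)⟧), Triangle.mk f g h ∈ E

/-- `g` is an `E`-epimorphism: it occurs as the second map of a triangle in `E`. -/
def SEpi (E : Set (Triangle K)) {Y Z : K} (g : Y ⟶ Z) : Prop :=
  ∃ (X : K) (f : X ⟶ Y) (h : Z ⟶ X⟦(1:ℤ)⟧), Triangle.mk f g h ∈ E

/-- `h` is an `E`-phantom: up to isomorphism of its target with a suspension, it
occurs as the third map of a triangle in `E`. -/
def SPhantom (E : Set (Triangle K)) {Z W : K} (h : Z ⟶ W) : Prop :=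
  ∃ (X Y : K) (f : X ⟶ Y) (g : Y ⟶ Z) (h' : Z ⟶ X⟦(1:ℤ)⟧) (e : (X⟦(1:ℤ)⟧ : K) ≅ W),
    Triangle.mk f g h' ∈ E ∧ h = h' ≫ e.hom

/-- `P` is `E`-projective: `Hom(P,-)` takes triangles in `E` to short exact sequences. -/
def EProjective (E : Set (Triangle K)) (P : K) : Prop :=
  ∀ T ∈ E,
    (∀ a : P ⟶ T.obj₁, a ≫ T.mor₁ = 0 → a = 0) ∧
    (∀ b : P ⟶ T.obj₂, b ≫ T.mor₂ = 0 → ∃ a : P ⟶ T.obj₁, a ≫ T.mor₁ = b) ∧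
    (∀ c : P ⟶ T.obj₃, ∃ b : P ⟶ T.obj₂, b ≫ T.mor₂ = c)

/-- `I` is `E`-injective: `Hom(-,I)` takes triangles in `E` to short exact sequences. -/
def EInjective (E : Set (Triangle K)) (I : K) : Prop :=
  ∀ T ∈ E,
    (∀ a : T.obj₃ ⟶ I, T.mor₂ ≫ a = 0 → a = 0) ∧
    (∀ b : T.obj₂ ⟶ I, T.mor₁ ≫ b = 0 → ∃ a : T.obj₃ ⟶ I, T.mor₂ ≫ a = b) ∧
    (∀ c : T.obj₁ ⟶ I, ∃ b : T.obj₂ ⟶ I, T.mor₁ ≫ b = c)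

/-- `K` has enough `E`-projectives: every object admits an `E`-projective precover. -/
def EnoughProjectives (E : Set (Triangle K)) : Prop :=
  ∀ X : K, ∃ (P : K) (p : P ⟶ X), EProjective E P ∧ SEpi E p

/-- `K` has enough `E`-injectives: every object admits an `E`-injective preenvelope. -/
def EnoughInjectives (E : Set (Triangle K)) : Prop :=
  ∀ X : K, ∃ (I : K) (i : X ⟶ I), EInjective E I ∧ SMono E i

/-- The direct sum of two triangles. -/
def sumTriangle [HasBinaryBiproducts K] (T₁ T₂ : Triangle K) : Triangle K :=
  Triangle.mk (biprod.map T₁.mor₁ T₂.mor₁) (biprod.map T₁.mor₂ T₂.mor₂)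
    (biprod.desc (T₁.mor₃ ≫ (shiftFunctor K (1:ℤ)).map biprod.inl)
      (T₂.mor₃ ≫ (shiftFunctor K (1:ℤ)).map biprod.inr))

/-- A proper class of triangles in the sense of Beligiannis: a class of distinguished
triangles closed under isomorphism, suspension, finite direct sums and retracts,
containing the trivial triangles, whose `E`-monomorphisms are closed under homotopy
pushout, whose `E`-epimorphisms are closed under homotopy pullback, and which is
saturated. -/
structure IsProperClass [HasBinaryBiproducts K] (E : Set (Triangle K)) : Prop where
  subset_dist : ∀ T ∈ E, T ∈ (distTriang K)
  iso_closed : ∀ (T₁ T₂ : Triangle K), (T₁ ≅ T₂) → T₁ ∈ E → T₂ ∈ E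
  shift_closed : ∀ T ∈ E, (Triangle.shiftFunctor K (1 : ℤ)).obj T ∈ E
  sum_closed : ∀ T₁ T₂ : Triangle K, T₁ ∈ E → T₂ ∈ E → sumTriangle T₁ T₂ ∈ E
  retract_closed : ∀ (T₁ T₂ : Triangle K) (i : T₁ ⟶ T₂) (r : T₂ ⟶ T₁),
    i ≫ r = 𝟙 T₁ → T₂ ∈ E → T₁ ∈ E
  contractible₁ : ∀ X : K, contractibleTriangle X ∈ E
  contractible₂ : ∀ Y : K,
    Triangle.mk (0 : (0 : K) ⟶ Y) (𝟙 Y) (0 : Y ⟶ ((0 : K)⟦(1:ℤ)⟧)) ∈ E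
  mono_pushout : ∀ {X Y X' : K} (f : X ⟶ Y), SMono E f → ∀ (t : X ⟶ X')
    (W : K) (u : Y ⊞ X' ⟶ W) (v : W ⟶ X⟦(1:ℤ)⟧),
    Triangle.mk (biprod.lift f t) u v ∈ (distTriang K) → SMono E (biprod.inr ≫ u)
  epi_pullback : ∀ {Y Z Z' : K} (g : Y ⟶ Z), SEpi E g → ∀ (t : Z' ⟶ Z)
    (W : K) (w : W ⟶ Y ⊞ Z') (v : Z ⟶ W⟦(1:ℤ)⟧),
    Triangle.mk w (biprod.desc g t) v ∈ (distTriang K) → SEpi E (w ≫ biprod.snd)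
  saturated : ∀ {Y Z : K} (g : Y ⟶ Z), SEpi E g → ∀ {W : K} (k : Z ⟶ W),
    SPhantom E (g ≫ k) → SPhantom E k

/-- A Frobenius class of triangles: enough projectives, enough injectives, and the
projectives coincide with the injectives. -/
structure IsFrobenius (E : Set (Triangle K)) : Prop where
  enough_proj : EnoughProjectives E
  enough_inj : EnoughInjectives E
  proj_eq_inj : ∀ X : K, EProjective E X ↔ EInjective E X

/-- A morphism factoring through an `E`-projective(-injective) object; these are the
morphisms killed by the quotient functor to the relative stable category. -/
def FactorsThroughProj (E : Set (Triangle K)) {X Y : K} (f : X ⟶ Y) : Prop :=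
  ∃ (P : K) (a : X ⟶ P) (b : P ⟶ Y), EProjective E P ∧ a ≫ b = f

/-- The image of a triangle under a functor equipped with a commutation with shift. -/
def mapTri {C : Type u'} {D : Type v'} [Category C] [Category D]
    [HasShift C ℤ] [HasShift D ℤ] (F : C ⥤ D) (hc : F.CommShift ℤ) (T : Triangle C) :
    Triangle D :=
  Triangle.mk (F.map T.mor₁) (F.map T.mor₂)
    (F.map T.mor₃ ≫ (Functor.CommShift.commShiftIso (self := hc) F (1:ℤ)).hom.app T.obj₁)

/-- An exact (triangulated) functor: additive, commutes with the shift, and sends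
distinguished triangles to distinguished triangles. -/
def IsExactFunctor {C : Type u'} {D : Type v'} [Category C] [Category D]
    [Preadditive C] [Preadditive D] [HasZeroObject C] [HasZeroObject D]
    [HasShift C ℤ] [HasShift D ℤ]
    [∀ n : ℤ, (shiftFunctor C n).Additive] [∀ n : ℤ, (shiftFunctor D n).Additive]
    [Pretriangulated C] [Pretriangulated D] (F : C ⥤ D) : Prop :=
  F.Additive ∧ ∃ hc : F.CommShift ℤ, ∀ T ∈ (distTriang C), mapTri F hc T ∈ (distTriang D)

/-- An abstract model of the relative stable category `S(K;E) = K/proj(E)` together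
with Beligiannis' triangulation: a pretriangulated category `S` and an additive
quotient functor `π : K ⥤ S` killing exactly the maps factoring through `proj(E)`,
such that the suspension of `S` is computed by cofibres of `inj(E)`-preenvelopes,
image-triangles of triangles of `E` are distinguished, and every distinguished
triangle of `S` is isomorphic to such an image-triangle. -/
structure StableModel (E : Set (Triangle K)) where
  S : Type u
  [cat : Category.{v} S]
  [preadd : Preadditive S]
  [zobj : HasZeroObject S]
  [hshift : HasShift S ℤ]
  [shiftAdd : ∀ n : ℤ, (shiftFunctor S n).Additive]
  [pretri : Pretriangulated S]
  π : K ⥤ S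
  [πAdd : π.Additive]
  π_full : π.Full
  π_essSurj : π.EssSurj
  π_map_zero_iff : ∀ {X Y : K} (f : X ⟶ Y), π.map f = 0 ↔ FactorsThroughProj E f
  susp : ∀ T ∈ E, EInjective E T.obj₂ →
    Nonempty (π.obj T.obj₃ ≅ (π.obj T.obj₁)⟦(1:ℤ)⟧)
  imageTriangle_distinguished : ∀ T ∈ E,
    ∃ h' : π.obj T.obj₃ ⟶ (π.obj T.obj₁)⟦(1:ℤ)⟧,
      Triangle.mk (π.map T.mor₁) (π.map T.mor₂) h' ∈ (distTriang S)
  distinguished_iso_image : ∀ T' ∈ (distTriang S), ∃ T ∈ E,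
    ∃ h' : π.obj T.obj₃ ⟶ (π.obj T.obj₁)⟦(1:ℤ)⟧,
      Triangle.mk (π.map T.mor₁) (π.map T.mor₂) h' ∈ (distTriang S) ∧
      Nonempty (T' ≅ Triangle.mk (π.map T.mor₁) (π.map T.mor₂) h')

attribute [instance] StableModel.cat StableModel.preadd StableModel.zobj
  StableModel.hshift StableModel.shiftAdd StableModel.pretri StableModel.πAdd


/-- A morphism factoring through an `E`-injective object. -/
def FactorsThroughInj (E : Set (Triangle K)) {X Y : K} (f : X ⟶ Y) : Prop :=
  ∃ (I : K) (a : X ⟶ I) (b : I ⟶ Y), EInjective E I ∧ a ≫ b = f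

/-- The `F`-split triangles: distinguished triangles whose third map is killed by `F`. -/
def splitClass {C : Type u'} {D : Type v'} [Category C] [Category D] [Preadditive C]
    [HasZeroObject C] [HasShift C ℤ] [∀ n : ℤ, (shiftFunctor C n).Additive]
    [Pretriangulated C] [Limits.HasZeroMorphisms D] (F : C ⥤ D) : Set (Triangle C) :=
  {T | T ∈ (distTriang C) ∧ F.map T.mor₃ = 0}

/-- The closure of a class of objects under finite direct sums and direct summands. -/
inductive AddClosure {C : Type u'} [Category.{v'} C] [Preadditive C] [HasZeroObject C]
    [HasBinaryBiproducts C] (A : Set C) : C → Prop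
  | of (X : C) (hX : X ∈ A) : AddClosure A X
  | zero (X : C) (hX : IsZero X) : AddClosure A X
  | sum (X Y : C) (hX : AddClosure A X) (hY : AddClosure A Y) : AddClosure A (X ⊞ Y)
  | summand (X Y Z : C) (hZ : AddClosure A Z) (e : (X ⊞ Y) ≅ Z) : AddClosure A X
  | isoClosed (X Y : C) (hX : AddClosure A X) (e : X ≅ Y) : AddClosure A Y

end RelStable

/-! For an `F`-split triangle `T`, the triangle `F T` is split, so every `Hom(F T, I)` and
`Hom(P, F T)` is short exact; adjunction carries this over to `Hom(T, U I)` and `Hom(V P, T)`.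
The unit `X ⟶ U F X` is an `F`-monomorphism because its image under `F` is split by the counit,
so every `F`-injective `X` is a retract of `U F X`, and in a triangulated category retracts
are direct summands. Dually for the counit `V F X ⟶ X` and `F`-projectives. -/

namespace RelStable

section

variable {K : Type u} [Category.{v} K] [Preadditive K] [HasShift K ℤ]

namespace EInjective

variable {E : Set (Triangle K)}

lemma of_retract {X Z : K} (h : Retract X Z) (hZ : EInjective E Z) : EInjective E X := by
  intro T hT
  obtain ⟨h₁, h₂, h₃⟩ := hZ T hT
  refine ⟨fun a ha => ?_, fun b hb => ?_, fun c => ?_⟩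
  · have : a ≫ h.i = 0 := h₁ _ (by rw [reassoc_of% ha, zero_comp])
    rw [← Category.comp_id a, ← h.retract, reassoc_of% this, zero_comp]
  · obtain ⟨a, ha⟩ := h₂ (b ≫ h.i) (by rw [reassoc_of% hb, zero_comp])
    exact ⟨a ≫ h.r, by rw [reassoc_of% ha, h.retract, Category.comp_id]⟩
  · obtain ⟨b, hb⟩ := h₃ (c ≫ h.i)
    exact ⟨b ≫ h.r, by rw [reassoc_of% hb, h.retract, Category.comp_id]⟩

lemma of_isZero {X : K} (hX : IsZero X) : EInjective E X := fun _ _ =>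
  ⟨fun _ _ => hX.eq_of_tgt _ _, fun _ _ => ⟨0, hX.eq_of_tgt _ _⟩, fun _ => ⟨0, hX.eq_of_tgt _ _⟩⟩

lemma biprod [HasBinaryBiproducts K] {X Y : K} (hX : EInjective E X) (hY : EInjective E Y) :
    EInjective E (X ⊞ Y) := by
  intro T hT
  obtain ⟨hX₁, hX₂, hX₃⟩ := hX T hT
  obtain ⟨hY₁, hY₂, hY₃⟩ := hY T hT
  refine ⟨fun a ha => ?_, fun b hb => ?_, fun c => ?_⟩
  · ext
    · exact (hX₁ _ (by rw [reassoc_of% ha, zero_comp])).trans zero_comp.symm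
    · exact (hY₁ _ (by rw [reassoc_of% ha, zero_comp])).trans zero_comp.symm
  · obtain ⟨aX, haX⟩ := hX₂ (b ≫ biprod.fst) (by rw [reassoc_of% hb, zero_comp])
    obtain ⟨aY, haY⟩ := hY₂ (b ≫ biprod.snd) (by rw [reassoc_of% hb, zero_comp])
    exact ⟨biprod.lift aX aY, by ext <;> simp [haX, haY]⟩
  · obtain ⟨bX, hbX⟩ := hX₃ (c ≫ biprod.fst)
    obtain ⟨bY, hbY⟩ := hY₃ (c ≫ biprod.snd)
    exact ⟨biprod.lift bX bY, by ext <;> simp [hbX, hbY]⟩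

lemma of_addClosure [HasZeroObject K] [HasBinaryBiproducts K] {A : Set K}
    (hA : ∀ Z ∈ A, EInjective E Z) {X : K} (hX : AddClosure A X) : EInjective E X := by
  induction hX with
  | of Z hZ => exact hA Z hZ
  | zero Z hZ => exact of_isZero hZ
  | sum _ _ _ _ ihX ihY => exact ihX.biprod ihY
  | summand X Y Z _ e ih =>
    exact ih.of_retract ((BinaryBiproduct.bicone X Y).retract_left.trans (Retract.ofIso e))
  | isoClosed _ _ _ e ih => exact ih.of_retract (Retract.ofIso e.symm)

lemma exists_retraction {X Y : K} (hX : EInjective E X) {i : X ⟶ Y} (hi : SMono E i) :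
    ∃ r : Y ⟶ X, i ≫ r = 𝟙 X := by
  obtain ⟨_, _, _, hT⟩ := hi
  exact (hX _ hT).2.2 (𝟙 X)

end EInjective

namespace EProjective

variable {E : Set (Triangle K)}

lemma of_retract {X Z : K} (h : Retract X Z) (hZ : EProjective E Z) : EProjective E X := by
  intro T hT
  obtain ⟨h₁, h₂, h₃⟩ := hZ T hT
  refine ⟨fun a ha => ?_, fun b hb => ?_, fun c => ?_⟩
  · have : h.r ≫ a = 0 := h₁ _ (by rw [Category.assoc, ha, comp_zero])
    rw [← Category.id_comp a, ← h.retract, Category.assoc, this, comp_zero]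
  · obtain ⟨a, ha⟩ := h₂ (h.r ≫ b) (by rw [Category.assoc, hb, comp_zero])
    exact ⟨h.i ≫ a, by rw [Category.assoc, ha, h.retract_assoc]⟩
  · obtain ⟨b, hb⟩ := h₃ (h.r ≫ c)
    exact ⟨h.i ≫ b, by rw [Category.assoc, hb, h.retract_assoc]⟩

lemma of_isZero {X : K} (hX : IsZero X) : EProjective E X := fun _ _ =>
  ⟨fun _ _ => hX.eq_of_src _ _, fun _ _ => ⟨0, hX.eq_of_src _ _⟩, fun _ => ⟨0, hX.eq_of_src _ _⟩⟩

lemma biprod [HasBinaryBiproducts K] {X Y : K} (hX : EProjective E X) (hY : EProjective E Y) :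
    EProjective E (X ⊞ Y) := by
  intro T hT
  obtain ⟨hX₁, hX₂, hX₃⟩ := hX T hT
  obtain ⟨hY₁, hY₂, hY₃⟩ := hY T hT
  refine ⟨fun a ha => ?_, fun b hb => ?_, fun c => ?_⟩
  · ext
    · exact (hX₁ _ (by rw [Category.assoc, ha, comp_zero])).trans comp_zero.symm
    · exact (hY₁ _ (by rw [Category.assoc, ha, comp_zero])).trans comp_zero.symm
  · obtain ⟨aX, haX⟩ := hX₂ (biprod.inl ≫ b) (by rw [Category.assoc, hb, comp_zero])
    obtain ⟨aY, haY⟩ := hY₂ (biprod.inr ≫ b) (by rw [Category.assoc, hb, comp_zero])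
    exact ⟨biprod.desc aX aY, by ext <;> simp [haX, haY]⟩
  · obtain ⟨bX, hbX⟩ := hX₃ (biprod.inl ≫ c)
    obtain ⟨bY, hbY⟩ := hY₃ (biprod.inr ≫ c)
    exact ⟨biprod.desc bX bY, by ext <;> simp [hbX, hbY]⟩

lemma of_addClosure [HasZeroObject K] [HasBinaryBiproducts K] {A : Set K}
    (hA : ∀ Z ∈ A, EProjective E Z) {X : K} (hX : AddClosure A X) : EProjective E X := by
  induction hX with
  | of Z hZ => exact hA Z hZ
  | zero Z hZ => exact of_isZero hZ
  | sum _ _ _ _ ihX ihY => exact ihX.biprod ihY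
  | summand X Y Z _ e ih =>
    exact ih.of_retract ((BinaryBiproduct.bicone X Y).retract_left.trans (Retract.ofIso e))
  | isoClosed _ _ _ e ih => exact ih.of_retract (Retract.ofIso e.symm)

lemma exists_section {X Y : K} (hX : EProjective E X) {p : Y ⟶ X} (hp : SEpi E p) :
    ∃ s : X ⟶ Y, s ≫ p = 𝟙 X := by
  obtain ⟨_, _, _, hT⟩ := hp
  exact (hX _ hT).2.2 (𝟙 X)

end EProjective

variable {L : Type u'} [Category.{v'} L] [Preadditive L] [HasShift L ℤ]
  {F : K ⥤ L} {hc : F.CommShift ℤ}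

lemma einjective_obj_of_adjunction {U : L ⥤ K} (adj : F ⊣ U) {E : Set (Triangle K)}
    {E' : Set (Triangle L)} (hE : ∀ T ∈ E, mapTri F hc T ∈ E') {I : L} (hI : EInjective E' I) :
    EInjective E (U.obj I) := by
  intro T hT
  obtain ⟨h₁, h₂, h₃⟩ : (∀ a : F.obj T.obj₃ ⟶ I, F.map T.mor₂ ≫ a = 0 → a = 0) ∧
      (∀ b : F.obj T.obj₂ ⟶ I, F.map T.mor₁ ≫ b = 0 → ∃ a, F.map T.mor₂ ≫ a = b) ∧
      (∀ c : F.obj T.obj₁ ⟶ I, ∃ b, F.map T.mor₁ ≫ b = c) := hI _ (hE T hT)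
  have := adj.isLeftAdjoint
  have hzero {X : K} : (adj.homEquiv X I).symm 0 = 0 := by simp [Adjunction.homEquiv_counit]
  refine ⟨fun a ha => ?_, fun b hb => ?_, fun c => ?_⟩
  · refine (adj.homEquiv _ _).symm.injective ((h₁ _ ?_).trans hzero.symm)
    rw [← adj.homEquiv_naturality_left_symm, ha, hzero]
  · obtain ⟨a, ha⟩ := h₂ ((adj.homEquiv _ _).symm b)
      (by rw [← adj.homEquiv_naturality_left_symm, hb, hzero])
    exact ⟨adj.homEquiv _ _ a, by rw [← adj.homEquiv_naturality_left, ha, Equiv.apply_symm_apply]⟩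
  · obtain ⟨b, hb⟩ := h₃ ((adj.homEquiv _ _).symm c)
    exact ⟨adj.homEquiv _ _ b, by rw [← adj.homEquiv_naturality_left, hb, Equiv.apply_symm_apply]⟩

lemma eprojective_obj_of_adjunction {V : L ⥤ K} (adj : V ⊣ F) {E : Set (Triangle K)}
    {E' : Set (Triangle L)} (hE : ∀ T ∈ E, mapTri F hc T ∈ E') {P : L} (hP : EProjective E' P) :
    EProjective E (V.obj P) := by
  intro T hT
  obtain ⟨h₁, h₂, h₃⟩ : (∀ a : P ⟶ F.obj T.obj₁, a ≫ F.map T.mor₁ = 0 → a = 0) ∧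
      (∀ b : P ⟶ F.obj T.obj₂, b ≫ F.map T.mor₂ = 0 → ∃ a, a ≫ F.map T.mor₁ = b) ∧
      (∀ c : P ⟶ F.obj T.obj₃, ∃ b, b ≫ F.map T.mor₂ = c) := hP _ (hE T hT)
  have := adj.isRightAdjoint
  have hzero {X : K} : adj.homEquiv P X 0 = 0 := by simp [Adjunction.homEquiv_unit]
  refine ⟨fun a ha => ?_, fun b hb => ?_, fun c => ?_⟩
  · refine (adj.homEquiv _ _).injective ((h₁ _ ?_).trans hzero.symm)
    rw [← adj.homEquiv_naturality_right, ha, hzero]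
  · obtain ⟨a, ha⟩ := h₂ (adj.homEquiv _ _ b)
      (by rw [← adj.homEquiv_naturality_right, hb, hzero])
    exact ⟨(adj.homEquiv _ _).symm a,
      by rw [← adj.homEquiv_naturality_right_symm, ha, Equiv.symm_apply_apply]⟩
  · obtain ⟨b, hb⟩ := h₃ (adj.homEquiv _ _ c)
    exact ⟨(adj.homEquiv _ _).symm b,
      by rw [← adj.homEquiv_naturality_right_symm, hb, Equiv.symm_apply_apply]⟩

end

variable {K : Type u} [Category.{v} K] [Preadditive K] [HasZeroObject K]
  [HasShift K ℤ] [∀ n : ℤ, (shiftFunctor K n).Additive] [Pretriangulated K]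

lemma AddClosure.of_retract [HasBinaryBiproducts K] {A : Set K} {X Y : K} (h : Retract X Y)
    (hY : AddClosure A Y) : AddClosure A X := by
  obtain ⟨Z, _, _, hT⟩ := distinguished_cocone_triangle h.i
  obtain ⟨e, -, -⟩ := exists_iso_binaryBiproduct_of_distTriang _ hT
    (Triangle.mor₃_eq_zero_of_mono₁ _ hT (inferInstanceAs (Mono h.i)))
  exact .summand X Z Y hY e.symm

lemma einjective_iff_addClosure [HasBinaryBiproducts K] {E : Set (Triangle K)} {A : Set K}
    (hA : ∀ Z ∈ A, EInjective E Z) (hmono : ∀ X, ∃ Z ∈ A, ∃ i : X ⟶ Z, SMono E i) (X : K) :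
    EInjective E X ↔ AddClosure A X := by
  refine ⟨fun hX => ?_, EInjective.of_addClosure hA⟩
  obtain ⟨Z, hZ, i, hi⟩ := hmono X
  obtain ⟨r, hr⟩ := hX.exists_retraction hi
  exact (AddClosure.of Z hZ).of_retract ⟨i, r, hr⟩

lemma eprojective_iff_addClosure [HasBinaryBiproducts K] {E : Set (Triangle K)} {A : Set K}
    (hA : ∀ Z ∈ A, EProjective E Z) (hepi : ∀ X, ∃ Z ∈ A, ∃ p : Z ⟶ X, SEpi E p) (X : K) :
    EProjective E X ↔ AddClosure A X := by
  refine ⟨fun hX => ?_, EProjective.of_addClosure hA⟩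
  obtain ⟨Z, hZ, p, hp⟩ := hepi X
  obtain ⟨s, hs⟩ := hX.exists_section hp
  exact (AddClosure.of Z hZ).of_retract ⟨s, p, hs⟩

variable {L : Type u'} [Category.{v'} L] [Preadditive L] [HasZeroObject L]
  [HasShift L ℤ] [∀ n : ℤ, (shiftFunctor L n).Additive] [Pretriangulated L]

lemma einjective_splitClass_id (I : L) : EInjective (splitClass (𝟭 L)) I := by
  rintro T ⟨hT, h₃ : T.mor₃ = 0⟩
  have := T.epi₂ hT h₃
  have := T.mono₁ hT h₃
  have := isSplitMono_of_mono T.mor₁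
  refine ⟨fun a ha => ?_, fun b hb => ?_, fun c => ⟨retraction T.mor₁ ≫ c, by simp⟩⟩
  · rwa [← cancel_epi T.mor₂, comp_zero]
  · obtain ⟨a, ha⟩ := T.yoneda_exact₂ hT b hb
    exact ⟨a, ha.symm⟩

lemma eprojective_splitClass_id (P : L) : EProjective (splitClass (𝟭 L)) P := by
  rintro T ⟨hT, h₃ : T.mor₃ = 0⟩
  have := T.epi₂ hT h₃
  have := T.mono₁ hT h₃
  have := isSplitEpi_of_epi T.mor₂
  refine ⟨fun a ha => ?_, fun b hb => ?_, fun c => ⟨c ≫ section_ T.mor₂, by simp⟩⟩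
  · rwa [← cancel_mono T.mor₁, zero_comp]
  · obtain ⟨a, ha⟩ := T.coyoneda_exact₂ hT b hb
    exact ⟨a, ha.symm⟩

variable {F : K ⥤ L} {hc : F.CommShift ℤ}

lemma mapTri_mem_splitClass_id (hF : ∀ T ∈ distTriang K, mapTri F hc T ∈ distTriang L)
    {T : Triangle K} (hT : T ∈ splitClass F) : mapTri F hc T ∈ splitClass (𝟭 L) :=
  ⟨hF T hT.1, show F.map T.mor₃ ≫ _ = 0 by rw [hT.2, zero_comp]⟩

lemma sMono_splitClass_of_mono_map (hF : ∀ T ∈ distTriang K, mapTri F hc T ∈ distTriang L)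
    {X Y : K} {f : X ⟶ Y} (hf : Mono (F.map f)) : SMono (splitClass F) f := by
  obtain ⟨Z, g, h, hT⟩ := distinguished_cocone_triangle f
  refine ⟨Z, g, h, hT, ?_⟩
  have : F.map h ≫ _ = 0 := (mapTri F hc _).mor₃_eq_zero_of_mono₁ (hF _ hT) hf
  exact (Preadditive.IsIso.comp_right_eq_zero _ _).1 this

lemma sEpi_splitClass_of_epi_map (hF : ∀ T ∈ distTriang K, mapTri F hc T ∈ distTriang L)
    {Y Z : K} {g : Y ⟶ Z} (hg : Epi (F.map g)) : SEpi (splitClass F) g := by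
  obtain ⟨X, f, h, hT⟩ := distinguished_cocone_triangle₁ g
  refine ⟨X, f, h, hT, ?_⟩
  have : F.map h ≫ _ = 0 := (mapTri F hc _).mor₃_eq_zero_of_epi₂ (hF _ hT) hg
  exact (Preadditive.IsIso.comp_right_eq_zero _ _).1 this

/-- Lemma 3.13: adjoints produce enough `F`-injectives and `F`-projectives for the
proper class of `F`-split triangles. -/
theorem statement2 {K : Type u} [Category.{v} K] [Preadditive K] [HasZeroObject K]
    [HasShift K ℤ] [∀ n : ℤ, (shiftFunctor K n).Additive] [Pretriangulated K]
    [HasBinaryBiproducts K] {L : Type u'} [Category.{v'} L] [Preadditive L] [HasZeroObject L]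
    [HasShift L ℤ] [∀ n : ℤ, (shiftFunctor L n).Additive] [Pretriangulated L]
    (F : K ⥤ L) (hFadd : F.Additive) (hc : F.CommShift ℤ)
    (hFexact : ∀ T ∈ (distTriang K), mapTri F hc T ∈ (distTriang L)) :
    -- (a)
    (∀ (U : L ⥤ K) (adj : F ⊣ U),
      (∀ Lo : L, EInjective (splitClass F) (U.obj Lo)) ∧
      (∀ X : K, SMono (splitClass F) (adj.unit.app X)) ∧
      EnoughInjectives (splitClass F) ∧
      (∀ X : K, EInjective (splitClass F) X ↔ AddClosure (Set.range U.obj) X)) ∧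
    -- (b)
    (∀ (V : L ⥤ K) (adj : V ⊣ F),
      (∀ Lo : L, EProjective (splitClass F) (V.obj Lo)) ∧
      (∀ X : K, SEpi (splitClass F) (adj.counit.app X)) ∧
      EnoughProjectives (splitClass F) ∧
      (∀ X : K, EProjective (splitClass F) X ↔ AddClosure (Set.range V.obj) X)) := by
  refine ⟨fun U adj => ?_, fun V adj => ?_⟩
  · have hinj (Lo : L) : EInjective (splitClass F) (U.obj Lo) :=
      einjective_obj_of_adjunction adj (fun _ => mapTri_mem_splitClass_id hFexact)
        (einjective_splitClass_id Lo)
    have hunit (X : K) : SMono (splitClass F) (adj.unit.app X) :=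
      sMono_splitClass_of_mono_map hFexact
        (IsSplitMono.mk' ⟨_, adj.left_triangle_components X⟩).mono
    exact ⟨hinj, hunit, fun X => ⟨_, _, hinj _, hunit X⟩,
      einjective_iff_addClosure (by rintro _ ⟨Lo, rfl⟩; exact hinj Lo)
        (fun X => ⟨_, ⟨F.obj X, rfl⟩, _, hunit X⟩)⟩
  · have hproj (Lo : L) : EProjective (splitClass F) (V.obj Lo) :=
      eprojective_obj_of_adjunction adj (fun _ => mapTri_mem_splitClass_id hFexact)
        (eprojective_splitClass_id Lo)
    have hcounit (X : K) : SEpi (splitClass F) (adj.counit.app X) :=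
      sEpi_splitClass_of_epi_map hFexact
        (IsSplitEpi.mk' ⟨_, adj.right_triangle_components X⟩).epi
    exact ⟨hproj, hcounit, fun X => ⟨_, _, hproj _, hcounit X⟩,
      eprojective_iff_addClosure (by rintro _ ⟨Lo, rfl⟩; exact hproj Lo)
        (fun X => ⟨_, ⟨F.obj X, rfl⟩, _, hcounit X⟩)⟩

end RelStable
end
end

section
/- Let E be a Frobenius class of triangles in a triangulated category K with quotient functor π: K → S(K;E). Two objects X, Y ∈ K satisfy π(X) ≅ π(Y) in S(K;E) if and only if there exist E-projective-injective objects C₁ and C₂ and an isomorphism X ⊕ C₁ ≅ Y ⊕ C₂ in K. -/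
/-!
Common definitions for formalizing "Relative stable categories and birationality"
(Balmer–Stevenson): proper classes of triangles in the sense of Beligiannis,
relative projectives/injectives, Frobenius classes, and abstract models of the
relative stable category together with Beligiannis' triangulation.
-/

noncomputable section

open CategoryTheory Limits Pretriangulated ZeroObject

universe v u v' u' v'' u'' v₁ u₁ v₂ u₂

namespace RelStable

variable {K : Type u} [Category.{v} K] [Preadditive K] [HasZeroObject K]
  [HasShift K ℤ] [∀ n : ℤ, (CategoryTheory.shiftFunctor K n).Additive] [Pretriangulated K]

/-!
Lift `π X ≅ π Y` to `f : X ⟶ Y` and `g : Y ⟶ X`. The defect `𝟙 X - f ≫ g` factors as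
`α ≫ β` through an `E`-projective `P`, so `(f, α) : X ⟶ Y ⊞ P` is a split monomorphism; in a
pretriangulated category its complement `Z` splits off, `Y ⊞ P ≅ X ⊞ Z`. Since `π` inverts
the inclusion `X ⟶ X ⊞ Z`, it kills `Z`, i.e. `Z` is `E`-projective. Conversely, `π` kills
`E`-projective summands.
-/

theorem _root_.CategoryTheory.Functor.isIso_map_biprod_inl_iff {C : Type u₁} {D : Type u₂}
    [Category.{v₁} C] [Category.{v₂} D] [Preadditive C] [Preadditive D] (F : C ⥤ D)
    [F.Additive] (A B : C) [HasBinaryBiproduct A B] :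
    IsIso (F.map (biprod.inl : A ⟶ A ⊞ B)) ↔ IsZero (F.obj B) := by
  constructor
  · intro _
    have hsnd : F.map (biprod.snd : A ⊞ B ⟶ B) = 0 := by
      rw [← cancel_epi (F.map biprod.inl), ← F.map_comp, biprod.inl_snd, Functor.map_zero,
        comp_zero]
    rw [IsZero.iff_id_eq_zero, ← F.map_id, ← biprod.inr_snd (X := A), F.map_comp, hsnd,
      comp_zero]
  · intro hB
    refine ⟨F.map biprod.fst, by rw [← F.map_comp, biprod.inl_fst, F.map_id], ?_⟩
    rw [← F.map_comp, eq_sub_of_add_eq biprod.total, F.map_sub, F.map_comp,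
      hB.eq_of_tgt (F.map biprod.snd) 0, zero_comp, sub_zero, F.map_id]

theorem _root_.CategoryTheory.Pretriangulated.exists_iso_biprod_of_isSplitMono
    {C : Type u₁} [Category.{v₁} C] [Preadditive C] [HasZeroObject C] [HasShift C ℤ]
    [∀ n : ℤ, (shiftFunctor C n).Additive] [Pretriangulated C] [HasBinaryBiproducts C]
    {X B : C} (u : X ⟶ B) [IsSplitMono u] :
    ∃ (Z : C) (e : B ≅ X ⊞ Z), u ≫ e.hom = biprod.inl := by
  obtain ⟨Z, q, δ, hT⟩ := distinguished_cocone_triangle u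
  obtain ⟨e, he, -⟩ := exists_iso_binaryBiproduct_of_distTriang _ hT
    (Triangle.mor₃_eq_zero_of_mono₁ _ hT (inferInstanceAs (Mono u)))
  exact ⟨Z, e, he⟩

theorem EProjective.of_retract_s8 {C : Type u₁} [Category.{v₁} C] [Preadditive C] [HasShift C ℤ]
    {E : Set (Triangle C)} {Z Q : C} (h : Retract Z Q)
    (hQ : EProjective E Q) : EProjective E Z := by
  intro T hT
  obtain ⟨h₁, h₂, h₃⟩ := hQ T hT
  refine ⟨fun a ha => ?_, fun b hb => ?_, fun c => ?_⟩
  · rw [← h.retract_assoc a, h₁ (h.r ≫ a) (by rw [Category.assoc, ha, comp_zero]), comp_zero]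
  · obtain ⟨a, ha⟩ := h₂ (h.r ≫ b) (by rw [Category.assoc, hb, comp_zero])
    exact ⟨h.i ≫ a, by rw [Category.assoc, ha, h.retract_assoc]⟩
  · obtain ⟨b, hb⟩ := h₃ (h.r ≫ c)
    exact ⟨h.i ≫ b, by rw [Category.assoc, hb, h.retract_assoc]⟩

namespace StableModel

variable {C : Type u₁} [Category.{v₁} C] [Preadditive C] [HasShift C ℤ] {E : Set (Triangle C)}
  (D : StableModel E)

theorem isZero_obj_iff_eProjective (Z : C) : IsZero (D.π.obj Z) ↔ EProjective E Z := by
  rw [IsZero.iff_id_eq_zero, ← D.π.map_id, D.π_map_zero_iff]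
  constructor
  · rintro ⟨Q, i, r, hQ, hir⟩
    exact hQ.of_retract_s8 ⟨i, r, hir⟩
  · exact fun hZ => ⟨Z, 𝟙 Z, 𝟙 Z, hZ, Category.comp_id _⟩

theorem isIso_map_biprod_inl_iff [HasBinaryBiproducts C] (X Y : C) :
    IsIso (D.π.map (biprod.inl : X ⟶ X ⊞ Y)) ↔ EProjective E Y := by
  rw [D.π.isIso_map_biprod_inl_iff, isZero_obj_iff_eProjective]

end StableModel

/-- Lemma 5.2: two objects have isomorphic images in the relative stable category if
and only if they are stably isomorphic, i.e. isomorphic after adding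
`E`-projective-injective summands. -/
theorem statement8 {K : Type u} [Category.{v} K] [Preadditive K] [HasZeroObject K]
    [HasShift K ℤ] [∀ n : ℤ, (shiftFunctor K n).Additive] [Pretriangulated K]
    [HasBinaryBiproducts K]
    (E : Set (Triangle K)) (hE : IsProperClass E) (hFrob : IsFrobenius E)
    (D : StableModel E) (X Y : K) :
    Nonempty (D.π.obj X ≅ D.π.obj Y) ↔
      ∃ C₁ C₂ : K, EProjective E C₁ ∧ EProjective E C₂ ∧
        Nonempty ((X ⊞ C₁) ≅ (Y ⊞ C₂)) := by
  constructor
  · rintro ⟨φ⟩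
    obtain ⟨f, hf⟩ := D.π_full.map_surjective φ.hom
    obtain ⟨g, hg⟩ := D.π_full.map_surjective φ.inv
    obtain ⟨P, α, β, hP, hαβ⟩ := (D.π_map_zero_iff (𝟙 X - f ≫ g)).1 (by simp [hf, hg])
    let u : X ⟶ Y ⊞ P := biprod.lift f α
    have : IsSplitMono u := .mk' ⟨biprod.desc g β, by simp [u, hαβ]⟩
    obtain ⟨Z, e, hue⟩ := Pretriangulated.exists_iso_biprod_of_isSplitMono u
    have : IsIso (D.π.map (biprod.inl : Y ⟶ Y ⊞ P)) := (D.isIso_map_biprod_inl_iff Y P).2 hP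
    have hu : D.π.map u = φ.hom ≫ D.π.map biprod.inl := by
      have hα : D.π.map α = 0 := ((D.isZero_obj_iff_eProjective P).2 hP).eq_of_tgt _ _
      rw [show u = f ≫ biprod.inl + α ≫ biprod.inr by ext <;> simp [u], Functor.map_add,
        Functor.map_comp, Functor.map_comp, hα, zero_comp, add_zero, hf]
    have : IsIso (D.π.map (biprod.inl : X ⟶ X ⊞ Z)) := by
      rw [← hue, Functor.map_comp, hu]
      infer_instance
    exact ⟨Z, P, (D.isIso_map_biprod_inl_iff X Z).1 this, hP, ⟨e.symm⟩⟩
  · rintro ⟨C₁, C₂, hC₁, hC₂, ⟨e⟩⟩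
    have := (D.isIso_map_biprod_inl_iff X C₁).2 hC₁
    have := (D.isIso_map_biprod_inl_iff Y C₂).2 hC₂
    exact ⟨asIso (D.π.map biprod.inl) ≪≫ D.π.mapIso e ≪≫
      (asIso (D.π.map biprod.inl)).symm⟩

end RelStable
end
end

section
/- Let E be a Frobenius class of triangles in a triangulated category K with quotient functor π: K → S(K;E), and let G: K → N be an exact functor of triangulated categories such that every triangle in E is G-split (i.e. the E-phantoms are contained in ker G). Let A ⊆ N be an additive subcategory containing G(proj(E)) and closed under direct summands. Then π(G⁻¹(A)) = { X ∈ S(K;E) | X ≅ π(Y) for some Y ∈ K with G(Y) ∈ A } is a thick subcategory of S(K;E). -/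
/-!
Common definitions for formalizing "Relative stable categories and birationality"
(Balmer–Stevenson): proper classes of triangles in the sense of Beligiannis,
relative projectives/injectives, Frobenius classes, and abstract models of the
relative stable category together with Beligiannis' triangulation.
-/

noncomputable section

open CategoryTheory Limits Pretriangulated ZeroObject

universe v u v' u' v'' u'' v₁ u₁ v₂ u₂

namespace RelStable

variable {K : Type u} [Category.{v} K] [Preadditive K] [HasZeroObject K]
  [HasShift K ℤ] [∀ n : ℤ, (CategoryTheory.shiftFunctor K n).Additive] [Pretriangulated K]

/-- A thick (triangulatd, summand-closed) subcategory, as a class of objects. -/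
def IsThickSubcat {C : Type u'} [Category.{v'} C] [Preadditive C] [HasZeroObject C]
    [HasShift C ℤ] [∀ n : ℤ, (shiftFunctor C n).Additive] [Pretriangulated C]
    [HasBinaryBiproducts C] (T : Set C) : Prop :=
  (∀ X Y : C, (X ≅ Y) → X ∈ T → Y ∈ T) ∧
  (∀ X : C, IsZero X → X ∈ T) ∧
  (∀ (n : ℤ) (X : C), X ∈ T → (X⟦n⟧ : C) ∈ T) ∧
  (∀ Tr ∈ (distTriang C), Tr.obj₁ ∈ T → Tr.obj₂ ∈ T → Tr.obj₃ ∈ T) ∧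
  (∀ X Y : C, (∃ Z : C, Nonempty ((X ⊞ Z) ≅ Y)) → Y ∈ T → X ∈ T)

/-- The smallest thick subcategory containing a given class of objects. -/
def thickClosure {C : Type u'} [Category.{v'} C] [Preadditive C] [HasZeroObject C]
    [HasShift C ℤ] [∀ n : ℤ, (shiftFunctor C n).Additive] [Pretriangulated C]
    [HasBinaryBiproducts C] (A : Set C) : Set C :=
  {X | ∀ T : Set C, IsThickSubcat T → A ⊆ T → X ∈ T}

/-- An additive subcategory: closed under isomorphism, containing the zero objects and
closed under finite direct sums. -/
def IsAdditiveSubcat {C : Type u'} [Category.{v'} C] [Preadditive C] [HasZeroObject C]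
    [HasBinaryBiproducts C] (T : Set C) : Prop :=
  (∀ X Y : C, (X ≅ Y) → X ∈ T → Y ∈ T) ∧
  (∀ X : C, IsZero X → X ∈ T) ∧
  (∀ X Y : C, X ∈ T → Y ∈ T → (X ⊞ Y) ∈ T)

/-- The `E`-two-out-of-three property for a class of objects. -/
def ETwoOutOfThree (E : Set (Triangle K)) (T : Set K) : Prop :=
  ∀ Tr ∈ E, (Tr.obj₁ ∈ T → Tr.obj₂ ∈ T → Tr.obj₃ ∈ T) ∧
    (Tr.obj₂ ∈ T → Tr.obj₃ ∈ T → Tr.obj₁ ∈ T) ∧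
    (Tr.obj₁ ∈ T → Tr.obj₃ ∈ T → Tr.obj₂ ∈ T)

/-- The subcategories of `K` corresponding to thick subcategories of the relative stable
category: additive, containing `proj(E)`, closed under direct summands, and satisfying
the `E`-two-out-of-three property. -/
def GoodSubcat [HasBinaryBiproducts K] (E : Set (Triangle K)) (T : Set K) : Prop :=
  IsAdditiveSubcat T ∧ (∀ P : K, EProjective E P → P ∈ T) ∧
  (∀ X Y : K, (∃ Z : K, Nonempty ((X ⊞ Z) ≅ Y)) → Y ∈ T → X ∈ T) ∧
  ETwoOutOfThree E T

/-- The essential image of a class of objects under a functor. -/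
def imageSet {C : Type u'} {D : Type v'} [Category C] [Category D] (F : C ⥤ D)
    (T : Set C) : Set D :=
  {Y | ∃ X ∈ T, Nonempty (F.obj X ≅ Y)}


/-- Proposition 5.9 (Carlson-type construction): if every triangle in `E` is `G`-split
and `A` is an additive, summand-closed subcategory of the target containing
`G(proj(E))`, then `π(G⁻¹(A))` is thick in `S(K;E)`. -/
theorem statement12 {K : Type u} [Category.{v} K] [Preadditive K] [HasZeroObject K]
    [HasShift K ℤ] [∀ n : ℤ, (shiftFunctor K n).Additive] [Pretriangulated K]
    [HasBinaryBiproducts K] [EssentiallySmall.{v} K] {N : Type u'} [Category.{v'} N] [Preadditive N] [HasZeroObject N]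
    [HasShift N ℤ] [∀ n : ℤ, (shiftFunctor N n).Additive] [Pretriangulated N]
    [HasBinaryBiproducts N]
    (E : Set (Triangle K)) (hE : IsProperClass E) (hFrob : IsFrobenius E)
    (D : StableModel E) [HasBinaryBiproducts D.S]
    (G : K ⥤ N) (hGadd : G.Additive) (hcG : G.CommShift ℤ)
    (hGexact : ∀ T ∈ (distTriang K), mapTri G hcG T ∈ (distTriang N))
    (hsplit : ∀ T ∈ E, G.map T.mor₃ = 0)
    (A : Set N) (hAadd : IsAdditiveSubcat A)
    (hAsummand : ∀ X Y : N, (∃ Z : N, Nonempty ((X ⊞ Z) ≅ Y)) → Y ∈ A → X ∈ A)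
    (hGproj : ∀ P : K, EProjective E P → G.obj P ∈ A) :
    IsThickSubcat {X : D.S | ∃ Y : K, G.obj Y ∈ A ∧ Nonempty (X ≅ D.π.obj Y)} := by
  haveI := D.π_full
  haveI := D.π_essSurj
  haveI : G.Additive := hGadd
  haveI : PreservesBinaryBiproducts G := preservesBinaryBiproducts_of_preservesBiproducts G
  haveI : PreservesBinaryBiproducts D.π := preservesBinaryBiproducts_of_preservesBiproducts D.π
  set T : Set D.S := {X : D.S | ∃ Y : K, G.obj Y ∈ A ∧ Nonempty (X ≅ D.π.obj Y)} with hTdef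
  -- A is closed under summands given an explicit direct sum decomposition
  have memA_of_summand : ∀ (X W Z : N), (W ≅ X ⊞ Z) → W ∈ A → X ∈ A :=
    fun X W Z e hW => hAsummand X W ⟨Z, ⟨e.symm⟩⟩ hW
  -- every triangle in E is G-split, hence its image under G splits
  have keyGsplit : ∀ T' ∈ E, Nonempty (G.obj T'.obj₂ ≅ G.obj T'.obj₁ ⊞ G.obj T'.obj₃) := by
    intro T' hT'
    have hd : mapTri G hcG T' ∈ distTriang N := hGexact T' (hE.subset_dist T' hT')
    have hz : (mapTri G hcG T').mor₃ = 0 := by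
      simp [mapTri, hsplit T' hT']
      rfl
    obtain ⟨e, -, -⟩ := exists_iso_binaryBiproduct_of_distTriang _ hd hz
    exact ⟨e⟩
  -- key lemma: membership of G-images in A is a stable invariant
  have key : ∀ (X Y : K), Nonempty (D.π.obj X ≅ D.π.obj Y) → G.obj Y ∈ A → G.obj X ∈ A := by
    rintro X Y ⟨e⟩ hY
    obtain ⟨f, hf⟩ := D.π.map_surjective e.hom
    obtain ⟨g, hg⟩ := D.π.map_surjective e.inv
    have h0 : D.π.map (f ≫ g - 𝟙 X) = 0 := by
      rw [Functor.map_sub, Functor.map_comp, hf, hg, e.hom_inv_id, D.π.map_id, sub_self]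
    obtain ⟨P, a, b, hP, hab⟩ := (D.π_map_zero_iff _).1 h0
    have hab' : a ≫ b = f ≫ g - 𝟙 X := hab
    have hs : biprod.lift f a ≫ biprod.desc g (-b) = 𝟙 X := by
      rw [biprod.lift_desc, Preadditive.comp_neg, hab']
      abel
    have hGs : G.map (biprod.lift f a) ≫ G.map (biprod.desc g (-b)) = 𝟙 _ := by
      rw [← G.map_comp, hs, G.map_id]
    obtain ⟨C0, u, v, hTd⟩ := distinguished_cocone_triangle (G.map (biprod.lift f a))
    haveI : IsSplitMono ((shiftFunctor N (1:ℤ)).map (G.map (biprod.lift f a))) :=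
      IsSplitMono.mk' ⟨(shiftFunctor N (1:ℤ)).map (G.map (biprod.desc g (-b))), by
        rw [← Functor.map_comp, hGs, (shiftFunctor N (1:ℤ)).map_id]⟩
    have hv : v = 0 := by
      have hz := comp_distTriang_mor_zero₃₁ _ hTd
      rw [← cancel_mono ((shiftFunctor N (1:ℤ)).map (G.map (biprod.lift f a))), zero_comp]
      exact hz
    obtain ⟨e2, -, -⟩ := exists_iso_binaryBiproduct_of_distTriang _ hTd hv
    have hYP : G.obj (Y ⊞ P) ∈ A :=
      hAadd.1 _ _ (G.mapBiprod Y P).symm (hAadd.2.2 _ _ hY (hGproj P hP))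
    exact memA_of_summand _ _ _ e2 hYP
  -- iso closure
  have isoT : ∀ X Y : D.S, (X ≅ Y) → X ∈ T → Y ∈ T := by
    rintro X Y e ⟨Z, hZ, ⟨e'⟩⟩
    exact ⟨Z, hZ, ⟨e.symm ≪≫ e'⟩⟩
  -- closure under single suspension
  have mem_shift1 : ∀ X : D.S, X ∈ T → (X⟦(1:ℤ)⟧ : D.S) ∈ T := by
    rintro X ⟨Y, hGY, ⟨e⟩⟩
    obtain ⟨I, i, hI, Z, g, h, hTE⟩ := hFrob.enough_inj Y
    obtain ⟨eZ⟩ := D.susp _ hTE hI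
    have hGZ : G.obj Z ∈ A := by
      obtain ⟨eS⟩ := keyGsplit _ hTE
      exact memA_of_summand _ _ _ (eS ≪≫ biprod.braiding _ _)
        (hGproj I ((hFrob.proj_eq_inj I).2 hI))
    exact ⟨Z, hGZ, ⟨(shiftFunctor D.S (1:ℤ)).mapIso e ≪≫ eZ.symm⟩⟩
  -- closure under single desuspension
  have mem_shiftneg : ∀ X : D.S, X ∈ T → (X⟦(-1:ℤ)⟧ : D.S) ∈ T := by
    rintro X ⟨Y, hGY, ⟨e⟩⟩
    obtain ⟨P, p, hP, W, f, h, hTE⟩ := hFrob.enough_proj Y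
    obtain ⟨eW⟩ := D.susp _ hTE ((hFrob.proj_eq_inj P).1 hP)
    have hGW : G.obj W ∈ A := by
      obtain ⟨eS⟩ := keyGsplit _ hTE
      exact memA_of_summand _ _ _ eS (hGproj P hP)
    refine ⟨W, hGW, ⟨?_⟩⟩
    exact (shiftFunctor D.S (-1:ℤ)).mapIso (e ≪≫ eW) ≪≫
      (shiftFunctorCompIsoId D.S (1:ℤ) (-1:ℤ) (by ring)).app (D.π.obj W)
  -- closure under all shifts
  have mem_shift : ∀ (n : ℤ) (X : D.S), X ∈ T → (X⟦n⟧ : D.S) ∈ T := by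
    intro n
    induction n using Int.induction_on with
    | zero =>
      intro X hX
      exact isoT X _ ((shiftFunctorZero D.S ℤ).app X).symm hX
    | succ n ih =>
      intro X hX
      exact isoT _ _ ((shiftFunctorAdd D.S (n:ℤ) (1:ℤ)).app X).symm (mem_shift1 _ (ih X hX))
    | pred n ih =>
      intro X hX
      exact isoT _ _
        ((shiftFunctorAdd' D.S (-(n:ℤ)) (-1:ℤ) (-(n:ℤ)-1) (by ring)).app X).symm
        (mem_shiftneg _ (ih X hX))
  refine ⟨isoT, ?_, mem_shift, ?_, ?_⟩
  · -- zero objects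
    intro X hX
    refine ⟨0, ?_, ⟨hX.iso (D.π.map_isZero (isZero_zero K))⟩⟩
    exact hAadd.2.1 _ (G.map_isZero (isZero_zero K))
  · -- triangle closure
    intro Tr hTr h1 h2
    obtain ⟨T', hT'E, h', hTd, ⟨eT⟩⟩ := D.distinguished_iso_image Tr hTr
    obtain ⟨Y₂, hY₂, ⟨e₂⟩⟩ := h2
    have hG2 : G.obj T'.obj₂ ∈ A := by
      refine key T'.obj₂ Y₂ ⟨?_⟩ hY₂
      exact ((Pretriangulated.Triangle.π₂).mapIso eT).symm ≪≫ e₂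
    obtain ⟨eS⟩ := keyGsplit _ hT'E
    have hG3 : G.obj T'.obj₃ ∈ A :=
      memA_of_summand _ _ _ (eS ≪≫ biprod.braiding _ _) hG2
    exact ⟨T'.obj₃, hG3, ⟨(Pretriangulated.Triangle.π₃).mapIso eT⟩⟩
  · -- summand closure
    rintro X Y ⟨Z, ⟨e⟩⟩ hY
    obtain ⟨W, hW, ⟨eY⟩⟩ := hY
    set X' := D.π.objPreimage X with hX'
    set Z' := D.π.objPreimage Z with hZ'
    have hiso : D.π.obj (X' ⊞ Z') ≅ D.π.obj W :=
      D.π.mapBiprod X' Z' ≪≫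
        biprod.mapIso (D.π.objObjPreimageIso X) (D.π.objObjPreimageIso Z) ≪≫ e ≪≫ eY
    have hGXZ : G.obj (X' ⊞ Z') ∈ A := key _ W ⟨hiso⟩ hW
    have hGX : G.obj X' ∈ A :=
      memA_of_summand _ _ _ (G.mapBiprod X' Z') hGXZ
    exact ⟨X', hGX, ⟨(D.π.objObjPreimageIso X).symm⟩⟩

end RelStable
end
end

section
/- Let K be a tensor-triangulated category with internal hom, and let E be a proper class of triangles in K. If E is hom-closed (closed under hom(W,−) for all W ∈ K) then proj(E) is closed under tensoring with arbitrary objects, and hence the ideal of maps factoring through proj(E) is tensor-closed. Dually, if E is closed under tensoring with arbitrary objects then inj(E) is hom-closed, and the ideal of maps factoring through inj(E) is hom-closed. If moreover E has enough projectives (respectively enough injectives), these implications become equivalences. -/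
/-!
Common definitions for formalizing "Relative stable categories and birationality"
(Balmer–Stevenson): proper classes of triangles in the sense of Beligiannis,
relative projectives/injectives, Frobenius classes, and abstract models of the
relative stable category together with Beligiannis' triangulation.
-/

noncomputable section

open CategoryTheory Limits Pretriangulated ZeroObject

universe v u v' u' v'' u'' v₁ u₁ v₂ u₂

namespace RelStable

variable {K : Type u} [Category.{v} K] [Preadditive K] [HasZeroObject K]
  [HasShift K ℤ] [∀ n : ℤ, (CategoryTheory.shiftFunctor K n).Additive] [Pretriangulated K]

open MonoidalCategory in
/-- A tensor-triangulated structure: tensoring on either side is exact (commutes with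
the shift and preserves distinguished triangles), and the two commutation isomorphisms
satisfy the usual Koszul sign rule. -/
def TensorTriangulatedOn (C : Type u') [Category.{v'} C] [Preadditive C] [HasZeroObject C]
    [HasShift C ℤ] [∀ n : ℤ, (shiftFunctor C n).Additive] [Pretriangulated C]
    [MonoidalCategory C] : Prop :=
  ∃ (cL : ∀ X : C, (tensorLeft X).CommShift ℤ)
    (cR : ∀ X : C, (tensorRight X).CommShift ℤ),
    (∀ X : C, ∀ T ∈ (distTriang C), mapTri (tensorLeft X) (cL X) T ∈ (distTriang C)) ∧
    (∀ X : C, ∀ T ∈ (distTriang C), mapTri (tensorRight X) (cR X) T ∈ (distTriang C)) ∧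
    (∀ X Y : C,
      (Functor.CommShift.commShiftIso (self := cL ((X⟦(1:ℤ)⟧ : C))) (tensorLeft ((X⟦(1:ℤ)⟧ : C))) (1:ℤ)).hom.app Y ≫
          (shiftFunctor C (1:ℤ)).map ((Functor.CommShift.commShiftIso (self := cR Y) (tensorRight Y) (1:ℤ)).hom.app X) =
        -((Functor.CommShift.commShiftIso (self := cR ((Y⟦(1:ℤ)⟧ : C))) (tensorRight ((Y⟦(1:ℤ)⟧ : C))) (1:ℤ)).hom.app X ≫
          (shiftFunctor C (1:ℤ)).map ((Functor.CommShift.commShiftIso (self := cL X) (tensorLeft X) (1:ℤ)).hom.app Y)))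

section TTK

variable [MonoidalCategory K]

open MonoidalCategory

/-- `E` is closed under tensoring, expressed on the ideal of `E`-phantoms. -/
def TensorClosedClass (E : Set (Triangle K)) : Prop :=
  ∀ (W : K) {Z Z' : K} (h : Z ⟶ Z'), SPhantom E h → SPhantom E (W ◁ h)

/-- `E` is closed under `hom(W,-)` for all `W`, expressed on the ideal of
`E`-phantoms. -/
def HomClosedClass [MonoidalClosed K] (E : Set (Triangle K)) : Prop :=
  ∀ (W : K) {Z Z' : K} (h : Z ⟶ Z'), SPhantom E h → SPhantom E ((ihom W).map h)

/-- A model of the relative stable category together with its symmetric monoidal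
structure, for which the quotient functor is monoidal. -/
structure MonoidalStableModel (E : Set (Triangle K)) extends StableModel E where
  [monS : MonoidalCategory S]
  [symmS : SymmetricCategory S]
  [πMon : π.Monoidal]

attribute [instance] MonoidalStableModel.monS MonoidalStableModel.symmS
  MonoidalStableModel.πMon

/-- The class of `B`-split triangles: distinguished triangles whose third map is
killed by `B ⊗ -`. -/
def BSplit (B : K) : Set (Triangle K) :=
  {T | T ∈ (distTriang K) ∧ B ◁ T.mor₃ = 0}

/-- The tensor multiples `B ⊗ K` of an object `B`. -/
def tensMultiples (B : K) : Set K := {Y | ∃ Z : K, Nonempty (Y ≅ B ⊗ Z)}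

/-- Tensor powers of an object. -/
def tpow (B : K) : ℕ → K
  | 0 => 𝟙_ K
  | (n + 1) => B ⊗ tpow B n

end TTK

/-!
Call `Q` left orthogonal to the `E`-phantoms if every composite `Q → Z → X⟦1⟧` with `Z → X⟦1⟧` the
third map of a triangle of `E` vanishes, and dually for right orthogonality. By the long exact
`Hom`-sequences, `Q` is `E`-projective iff `Q` and `Q⟦1⟧` are left orthogonal to the phantoms, and
dually for injectives. Under `W ⊗ - ⊣ hom(W, -)` a composite `W ⊗ Q → Z → X⟦1⟧` corresponds to
`Q → hom(W, Z) → hom(W, X⟦1⟧)`, so hom-closedness of `E` carries left orthogonality from `Q` to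
`W ⊗ Q`, and tensor-closedness carries right orthogonality from `I` to `hom(W, I)`; both functors
commute with `⟦1⟧` (the right adjoint inherits this from the left one).

Conversely, given enough projectives and a phantom `h`, an `E`-precover `p` of `hom(W, Z)` satisfies
`p ≫ hom(W, h) = 0` because its adjoint starts at the projective `W ⊗ P`; saturation then makes
`hom(W, h)` a phantom. Given enough injectives, an `E`-preenvelope of `W ⊗ X` extends along `W ⊗ f`
since `hom(W, I)` is injective, which maps the distinguished triangle `W ⊗ T` to a triangle of `E`
and exhibits `W ⊗ h` as a composite with a phantom.
-/

set_option linter.unusedSectionVars false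

open MonoidalCategory MonoidalClosed

lemma exists_eq_mor₁_comp_of_mor₃_comp_shift_eq_zero {T : Triangle K} (hT : T ∈ distTriang K)
    {X : K} (u : T.obj₁ ⟶ X) (hu : T.mor₃ ≫ u⟦(1:ℤ)⟧' = 0) :
    ∃ b : T.obj₂ ⟶ X, u = T.mor₁ ≫ b := by
  obtain ⟨g, hg⟩ := Triangle.yoneda_exact₂ _ (rot_of_distTriang _ (rot_of_distTriang _ hT))
    (u⟦(1:ℤ)⟧') hu
  obtain ⟨b, hb⟩ : ∃ b : T.obj₂ ⟶ X, b⟦(1:ℤ)⟧' = g := Functor.map_surjective _ g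
  refine ⟨-b, (shiftFunctor K (1:ℤ)).map_injective ?_⟩
  simp only [hg, ← hb, Triangle.rotate, Triangle.mk_mor₂, Functor.map_comp, Functor.map_neg,
    Preadditive.comp_neg]
  exact Preadditive.neg_comp _ _

section Orthogonality

variable (E : Set (Triangle K))

def LeftOrthogonalToPhantoms (Q : K) : Prop :=
  ∀ T ∈ E, ∀ c : Q ⟶ T.obj₃, c ≫ T.mor₃ = 0

def RightOrthogonalToPhantoms (I : K) : Prop :=
  ∀ T ∈ E, ∀ e : T.obj₁⟦(1:ℤ)⟧ ⟶ I, T.mor₃ ≫ e = 0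

variable {E}

lemma LeftOrthogonalToPhantoms.of_iso {Q Q' : K} (h : LeftOrthogonalToPhantoms E Q)
    (e : Q' ≅ Q) : LeftOrthogonalToPhantoms E Q' := fun T hT c => by
  simpa using e.hom ≫= h T hT (e.inv ≫ c)

lemma RightOrthogonalToPhantoms.of_iso {I I' : K} (h : RightOrthogonalToPhantoms E I)
    (e : I ≅ I') : RightOrthogonalToPhantoms E I' := fun T hT c => by
  simpa using h T hT (c ≫ e.inv) =≫ e.hom

lemma eProjective_iff (hE : E ⊆ distTriang K) {Q : K} :
    EProjective E Q ↔
      LeftOrthogonalToPhantoms E Q ∧ LeftOrthogonalToPhantoms E (Q⟦(1:ℤ)⟧) := by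
  constructor
  · intro hQ
    refine ⟨fun T hT c => ?_, fun T hT d => ?_⟩
    · obtain ⟨b, rfl⟩ := (hQ T hT).2.2 c
      simp [comp_distTriang_mor_zero₂₃ _ (hE hT)]
    · obtain ⟨a, ha⟩ := (shiftFunctor K (1:ℤ)).map_surjective (d ≫ T.mor₃)
      have ha₀ : a ≫ T.mor₁ = 0 := (shiftFunctor K (1:ℤ)).map_injective (by
        simp [ha, comp_distTriang_mor_zero₃₁ _ (hE hT)])
      rw [← ha, (hQ T hT).1 a ha₀, Functor.map_zero]
  · rintro ⟨hQ, hQ₁⟩ T hT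
    refine ⟨fun a ha => ?_, fun b hb => ?_, fun c => ?_⟩
    · obtain ⟨d, hd⟩ := Triangle.coyoneda_exact₁ T (hE hT) (a⟦(1:ℤ)⟧')
        (by rw [← Functor.map_comp, ha, Functor.map_zero])
      exact (shiftFunctor K (1:ℤ)).map_injective (by rw [hd, hQ₁ T hT d, Functor.map_zero])
    · obtain ⟨a, ha⟩ := Triangle.coyoneda_exact₂ T (hE hT) b hb
      exact ⟨a, ha.symm⟩
    · obtain ⟨b, hb⟩ := Triangle.coyoneda_exact₃ T (hE hT) c (hQ T hT c)
      exact ⟨b, hb.symm⟩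

lemma eInjective_iff (hE : E ⊆ distTriang K) {I : K} :
    EInjective E I ↔
      RightOrthogonalToPhantoms E I ∧ RightOrthogonalToPhantoms E (I⟦(1:ℤ)⟧) := by
  constructor
  · intro hI
    refine ⟨fun T hT e => (hI T hT).1 _ ?_, fun T hT e => ?_⟩
    · rw [← Category.assoc, comp_distTriang_mor_zero₂₃ _ (hE hT), zero_comp]
    · obtain ⟨e', rfl⟩ := (shiftFunctor K (1:ℤ)).map_surjective e
      obtain ⟨b, rfl⟩ := (hI T hT).2.2 e'
      rw [Functor.map_comp, ← Category.assoc, comp_distTriang_mor_zero₃₁ _ (hE hT), zero_comp]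
  · rintro ⟨hI, hI₁⟩ T hT
    refine ⟨fun a ha => ?_, fun b hb => ?_, fun c => ?_⟩
    · obtain ⟨e, rfl⟩ := Triangle.yoneda_exact₃ T (hE hT) a ha
      exact hI T hT e
    · obtain ⟨a, ha⟩ := Triangle.yoneda_exact₂ T (hE hT) b hb
      exact ⟨a, ha.symm⟩
    · obtain ⟨b, hb⟩ :=
        exists_eq_mor₁_comp_of_mor₃_comp_shift_eq_zero (hE hT) c (hI₁ T hT _)
      exact ⟨b, hb.symm⟩

end Orthogonality

section Phantoms

variable {E : Set (Triangle K)}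

lemma sPhantom_mor₃ {T : Triangle K} (hT : T ∈ E) : SPhantom E T.mor₃ :=
  ⟨T.obj₁, T.obj₂, T.mor₁, T.mor₂, T.mor₃, Iso.refl _, hT, by simp⟩

lemma SPhantom.comp_iso {Z Z' Z'' : K} {k : Z ⟶ Z'} (hk : SPhantom E k) (j : Z' ≅ Z'') :
    SPhantom E (k ≫ j.hom) := by
  obtain ⟨X, Y, f, g, h, e, hT, rfl⟩ := hk
  exact ⟨X, Y, f, g, h, e ≪≫ j, hT, by simp⟩

variable [HasBinaryBiproducts K]

lemma sPhantom_zero (hE : IsProperClass E) (Z Z' : K) : SPhantom E (0 : Z ⟶ Z') := by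
  -- the sum of `Z'⟦-1⟧ = Z'⟦-1⟧ → 0` and `0 → Z = Z` is a triangle of `E` with zero third map
  set S := sumTriangle (contractibleTriangle (Z'⟦(-1:ℤ)⟧))
    (Triangle.mk (0 : (0 : K) ⟶ Z) (𝟙 Z) 0)
  have hS : S ∈ E := hE.sum_closed _ _ (hE.contractible₁ _) (hE.contractible₂ Z)
  have hS₃ : S.mor₃ = 0 := by
    apply biprod.hom_ext'
    · erw [biprod.inl_desc]; exact zero_comp.trans comp_zero.symm
    · erw [biprod.inr_desc]; exact zero_comp.trans comp_zero.symm
  let j : S.obj₃ ≅ Z := (isoZeroBiprod (isZero_zero K)).symm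
  have hS' : Triangle.mk S.mor₁ (S.mor₂ ≫ j.hom) 0 ∈ E := by
    refine hE.iso_closed S _ (Triangle.isoMk _ _ (Iso.refl _) (Iso.refl _) j ?_ ?_ ?_) hS
    · exact (Category.comp_id _).trans (Category.id_comp _).symm
    · exact (Category.id_comp _).symm
    · exact (congrArg (· ≫ _) hS₃).trans (zero_comp.trans comp_zero.symm)
  let e : S.obj₁⟦(1:ℤ)⟧ ≅ Z' :=
    (shiftFunctor K (1:ℤ)).mapIso (isoBiprodZero (isZero_zero K)).symm ≪≫
      (shiftFunctorCompIsoId K (-1:ℤ) 1 (by norm_num)).app Z'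
  exact ⟨_, _, _, _, _, e, hS', by simp⟩

lemma SPhantom.precomp (hE : IsProperClass E) {Q Z Z' : K} (w : Q ⟶ Z) {k : Z ⟶ Z'}
    (hk : SPhantom E k) : SPhantom E (w ≫ k) := by
  obtain ⟨X, Y, f, g, h, e, hT, rfl⟩ := hk
  -- pull the `E`-epimorphism `g` back along `w`; the pulled-back epimorphism kills `w ≫ h`
  obtain ⟨W, w₁, v, hW⟩ := distinguished_cocone_triangle₁ (biprod.desc g w)
  refine hE.saturated _ (hE.epi_pullback g ⟨X, f, h, hT⟩ w W w₁ v hW) _ ?_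
  have hgh : g ≫ h = 0 := comp_distTriang_mor_zero₂₃ _ (hE.subset_dist _ hT)
  have hw : w₁ ≫ biprod.snd ≫ w = -(w₁ ≫ biprod.fst ≫ g) := by
    rw [eq_neg_iff_add_eq_zero, add_comm, ← Preadditive.comp_add, ← biprod.desc_eq]
    exact comp_distTriang_mor_zero₁₂ _ hW
  have hzero : (w₁ ≫ biprod.snd) ≫ w ≫ h ≫ e.hom = 0 := by
    simp [reassoc_of% hw, reassoc_of% hgh]
  rw [hzero]
  exact sPhantom_zero hE _ _

lemma sPhantom_mor₃_of_sMono_comp (hE : IsProperClass E) {T : Triangle K}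
    (hT : T ∈ distTriang K) {Y : K} (b : T.obj₂ ⟶ Y) (hb : SMono E (T.mor₁ ≫ b)) :
    SPhantom E T.mor₃ := by
  obtain ⟨Z, g, h, hS⟩ := hb
  obtain ⟨c, -, hc⟩ := complete_distinguished_triangle_morphism T _ hT (hE.subset_dist _ hS)
    (𝟙 T.obj₁) b (Category.id_comp _).symm
  erw [CategoryTheory.Functor.map_id, Category.comp_id] at hc
  rw [hc]
  exact (sPhantom_mor₃ hS).precomp hE c

end Phantoms

section Monoidal

variable [MonoidalCategory K] [MonoidalClosed K] {E : Set (Triangle K)}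

lemma curry_zero {W X Y : K} : curry (0 : W ⊗ X ⟶ Y) = 0 := by
  rw [curry_eq, Functor.map_zero, comp_zero]

lemma uncurry_zero {W X Y : K} : uncurry (0 : X ⟶ (ihom W).obj Y) = 0 := by
  rw [← curry_zero, uncurry_curry]

lemma leftOrthogonalToPhantoms_tensor (hE : HomClosedClass E) {Q : K}
    (hQ : LeftOrthogonalToPhantoms E Q) (W : K) : LeftOrthogonalToPhantoms E (W ⊗ Q) := by
  intro T hT c
  obtain ⟨X, Y, f, g, h, e, hS, hmor₃⟩ := hE W T.mor₃ (sPhantom_mor₃ hT)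
  have hzero : curry c ≫ h = 0 := hQ _ hS (curry c)
  apply curry_injective
  rw [curry_natural_right, hmor₃, ← Category.assoc, hzero, zero_comp, curry_zero]

lemma rightOrthogonalToPhantoms_ihom (hE : TensorClosedClass E) {I : K}
    (hI : RightOrthogonalToPhantoms E I) (W : K) :
    RightOrthogonalToPhantoms E ((ihom W).obj I) := by
  intro T hT c
  obtain ⟨X, Y, f, g, h, e, hS, hmor₃⟩ := hE W T.mor₃ (sPhantom_mor₃ hT)
  have hzero : h ≫ e.hom ≫ uncurry c = 0 := hI _ hS (e.hom ≫ uncurry c)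
  apply uncurry_injective
  rw [uncurry_natural_left, hmor₃, Category.assoc, hzero, uncurry_zero]

lemma eProjective_tensor (hE : E ⊆ distTriang K) (hhom : HomClosedClass E) {P : K}
    (hP : EProjective E P) (W : K) [(tensorLeft W).CommShift ℤ] :
    EProjective E (W ⊗ P) := by
  obtain ⟨hP₀, hP₁⟩ := (eProjective_iff hE).1 hP
  exact (eProjective_iff hE).2 ⟨leftOrthogonalToPhantoms_tensor hhom hP₀ W,
    (leftOrthogonalToPhantoms_tensor hhom hP₁ W).of_iso
      (((tensorLeft W).commShiftIso (1:ℤ)).app P).symm⟩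

lemma eInjective_ihom (hE : E ⊆ distTriang K) (htensor : TensorClosedClass E) {I : K}
    (hI : EInjective E I) (W : K) [(tensorLeft W).CommShift ℤ] :
    EInjective E ((ihom W).obj I) := by
  let := (ihom.adjunction W).rightAdjointCommShift ℤ
  obtain ⟨hI₀, hI₁⟩ := (eInjective_iff hE).1 hI
  exact (eInjective_iff hE).2 ⟨rightOrthogonalToPhantoms_ihom htensor hI₀ W,
    (rightOrthogonalToPhantoms_ihom htensor hI₁ W).of_iso
      (((ihom W).commShiftIso (1:ℤ)).app I)⟩

lemma FactorsThroughProj.comp {X Y Y' : K} {f : X ⟶ Y} (hf : FactorsThroughProj E f)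
    (g : Y ⟶ Y') : FactorsThroughProj E (f ≫ g) := by
  obtain ⟨P, a, b, hP, rfl⟩ := hf
  exact ⟨P, a, b ≫ g, hP, (Category.assoc _ _ _).symm⟩

lemma FactorsThroughProj.precomp {X X' Y : K} {f : X ⟶ Y} (hf : FactorsThroughProj E f)
    (g : X' ⟶ X) : FactorsThroughProj E (g ≫ f) := by
  obtain ⟨P, a, b, hP, rfl⟩ := hf
  exact ⟨P, g ≫ a, b, hP, Category.assoc _ _ _⟩

lemma FactorsThroughProj.whiskerLeft
    (hproj : ∀ P W : K, EProjective E P → EProjective E (W ⊗ P))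
    {X Y : K} {f : X ⟶ Y} (hf : FactorsThroughProj E f) (W : K) :
    FactorsThroughProj E (W ◁ f) := by
  obtain ⟨P, a, b, hP, rfl⟩ := hf
  exact ⟨W ⊗ P, W ◁ a, W ◁ b, hproj P W hP, (MonoidalCategory.whiskerLeft_comp W a b).symm⟩

lemma FactorsThroughProj.whiskerRight [BraidedCategory K]
    (hproj : ∀ P W : K, EProjective E P → EProjective E (W ⊗ P))
    {X Y : K} {f : X ⟶ Y} (hf : FactorsThroughProj E f) (W : K) :
    FactorsThroughProj E (f ▷ W) := by
  have hbraid : f ▷ W = (β_ X W).hom ≫ W ◁ f ≫ (β_ Y W).inv := by simp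
  rw [hbraid]
  exact ((hf.whiskerLeft hproj W).comp _).precomp _

lemma FactorsThroughInj.ihom_map
    (hinj : ∀ I W : K, EInjective E I → EInjective E ((ihom W).obj I))
    {X Y : K} {f : X ⟶ Y} (hf : FactorsThroughInj E f) (W : K) :
    FactorsThroughInj E ((ihom W).map f) := by
  obtain ⟨I, a, b, hI, rfl⟩ := hf
  exact ⟨(ihom W).obj I, (ihom W).map a, (ihom W).map b, hinj I W hI,
    (Functor.map_comp _ _ _).symm⟩

variable [HasBinaryBiproducts K]

lemma homClosedClass_of_eProjective_tensor (hE : IsProperClass E)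
    (henough : EnoughProjectives E)
    (hproj : ∀ P W : K, EProjective E P → EProjective E (W ⊗ P)) : HomClosedClass E := by
  intro W Z Z' k hk
  obtain ⟨P, p, hP, hp⟩ := henough ((ihom W).obj Z)
  refine hE.saturated p hp _ ?_
  obtain ⟨X, Y, f, g, h, e, hT, rfl⟩ := hk
  have hzero : uncurry p ≫ h = 0 :=
    ((eProjective_iff hE.subset_dist).1 (hproj P W hP)).1 _ hT (uncurry p)
  have hp₀ : p ≫ (ihom W).map (h ≫ e.hom) = 0 := by
    rw [← curry_uncurry p, ← curry_natural_right, ← Category.assoc, hzero, zero_comp,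
      curry_zero]
  rw [hp₀]
  exact sPhantom_zero hE _ _

lemma tensorClosedClass_of_eInjective_ihom (hE : IsProperClass E)
    (henough : EnoughInjectives E)
    (hinj : ∀ I W : K, EInjective E I → EInjective E ((ihom W).obj I))
    [∀ W : K, (tensorLeft W).CommShift ℤ]
    (hexact : ∀ W : K, ∀ T ∈ distTriang K,
      mapTri (tensorLeft W) inferInstance T ∈ distTriang K) :
    TensorClosedClass E := by
  have hmor₃ : ∀ T ∈ E, ∀ W : K, SPhantom E (W ◁ T.mor₃) := by
    intro T hT W
    obtain ⟨I, i, hI, hi⟩ := henough (W ⊗ T.obj₁)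
    obtain ⟨b, hb⟩ := (hinj I W hI T hT).2.2 (curry i)
    have hfb : W ◁ T.mor₁ ≫ uncurry b = i := by
      rw [← uncurry_natural_left, hb, uncurry_curry]
    have hWT : SPhantom E (mapTri (tensorLeft W) inferInstance T).mor₃ :=
      sPhantom_mor₃_of_sMono_comp hE (hexact W T (hE.subset_dist T hT)) (uncurry b) (hfb ▸ hi)
    have hWT' : W ◁ T.mor₃ = (mapTri (tensorLeft W) inferInstance T).mor₃ ≫
        (((tensorLeft W).commShiftIso (1:ℤ)).app T.obj₁).inv := (Iso.eq_comp_inv _).2 rfl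
    rw [hWT']
    exact hWT.comp_iso (((tensorLeft W).commShiftIso (1:ℤ)).app T.obj₁).symm
  rintro W Z Z' _ ⟨X, Y, f, g, h, e, hT, rfl⟩
  rw [MonoidalCategory.whiskerLeft_comp]
  exact (hmor₃ _ hT W).comp_iso (whiskerLeftIso W e)

end Monoidal

open MonoidalCategory in
/-- Lemma 7.8: if the proper class `E` is hom-closed then `proj(E)` is closed under
tensoring (and the ideal of maps factoring through `proj(E)` is tensor-closed); dually,
if `E` is tensor-closed then `inj(E)` is hom-closed (and the corresponding ideal is
hom-closed). Given enough projectives (respectively injectives) these implications are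
equivalences. -/
theorem statement14 {K : Type u} [Category.{v} K] [Preadditive K] [HasZeroObject K]
    [HasShift K ℤ] [∀ n : ℤ, (shiftFunctor K n).Additive] [Pretriangulated K]
    [HasBinaryBiproducts K] [MonoidalCategory K] [SymmetricCategory K] [MonoidalPreadditive K] [MonoidalClosed K]
    (htt : TensorTriangulatedOn K)
    (E : Set (Triangle K)) (hE : IsProperClass E) :
    (HomClosedClass E →
      (∀ P W : K, EProjective E P → EProjective E (W ⊗ P)) ∧
      (∀ {X Y : K} (f : X ⟶ Y) (W : K), FactorsThroughProj E f →
        FactorsThroughProj E (W ◁ f) ∧ FactorsThroughProj E (f ▷ W))) ∧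
    (TensorClosedClass E →
      (∀ I W : K, EInjective E I → EInjective E ((ihom W).obj I)) ∧
      (∀ {X Y : K} (f : X ⟶ Y) (W : K), FactorsThroughInj E f →
        FactorsThroughInj E ((ihom W).map f))) ∧
    (EnoughProjectives E →
      (HomClosedClass E ↔ ∀ P W : K, EProjective E P → EProjective E (W ⊗ P))) ∧
    (EnoughInjectives E →
      (TensorClosedClass E ↔ ∀ I W : K, EInjective E I → EInjective E ((ihom W).obj I))) := by
  obtain ⟨cL, -, hexact, -, -⟩ := htt
  let := cL
  have proj_tensor (hhom : HomClosedClass E) (P W : K) (hP : EProjective E P) :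
      EProjective E (W ⊗ P) :=
    eProjective_tensor hE.subset_dist hhom hP W
  have inj_ihom (htensor : TensorClosedClass E) (I W : K) (hI : EInjective E I) :
      EInjective E ((ihom W).obj I) :=
    eInjective_ihom hE.subset_dist htensor hI W
  refine ⟨fun hhom => ⟨proj_tensor hhom, fun f W hf => ?_⟩,
    fun htensor => ⟨inj_ihom htensor, fun f W hf => hf.ihom_map (inj_ihom htensor) W⟩,
    fun henough => ⟨proj_tensor, homClosedClass_of_eProjective_tensor hE henough⟩,
    fun henough => ⟨inj_ihom, (tensorClosedClass_of_eInjective_ihom hE henough · hexact)⟩⟩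
  exact ⟨hf.whiskerLeft (proj_tensor hhom) W, hf.whiskerRight (proj_tensor hhom) W⟩

end RelStable
end
end

section
/- Let K be a tensor-triangulated category and B ∈ K a rigid object. (a) The functor B ⊗ −: K → K is faithful if and only if the coevaluation coev: 1 → B ⊗ B^∨ is a split monomorphism, if and only if the relative stable category S(K;B) = K/add(B ⊗ K) is the zero category. (b) The objects B and B^∨, and more generally all the rigid objects B^{⊗m} ⊗ (B^∨)^{⊗n} for m, n > 0, define the same relative stable category S(K;B) (i.e. add(B ⊗ K) = add(B^∨ ⊗ K) = add(B^{⊗m} ⊗ (B^∨)^{⊗n} ⊗ K)). -/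
/-!
Common definitions for formalizing "Relative stable categories and birationality"
(Balmer–Stevenson): proper classes of triangles in the sense of Beligiannis,
relative projectives/injectives, Frobenius classes, and abstract models of the
relative stable category together with Beligiannis' triangulation.
-/

noncomputable section

open CategoryTheory Limits Pretriangulated ZeroObject

universe v u v' u' v'' u'' v₁ u₁ v₂ u₂

namespace RelStable

variable {K : Type u} [Category.{v} K] [Preadditive K] [HasZeroObject K]
  [HasShift K ℤ] [∀ n : ℤ, (CategoryTheory.shiftFunctor K n).Additive] [Pretriangulated K]

/-!
Write `R A` (`retractsOfMultiples A`) for the objects that are retracts of some `A ⊗ W`; in a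
pretriangulated category these are exactly `add(A ⊗ K)`. The zig-zag identities make `B` a retract
of `B ⊗ Bᘁ ⊗ B` and `Bᘁ` a retract of `Bᘁ ⊗ B ⊗ Bᘁ`, so `R B = R Bᘁ`, and `B ∈ R (A ⊗ A')` as soon
as `B ∈ R A` and `B ∈ R A'`; this gives (b). The `B`-split projectives are exactly `R Bᘁ`:
`Bᘁ ⊗ W` is projective through the adjunction `Bᘁ ⊗ - ⊣ B ⊗ -`, and a projective `P` splits off
the counit `Bᘁ ⊗ B ⊗ P ⟶ P`, which `B ⊗ -` turns into a split epimorphism. Hence `S(K;B) = 0`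
iff `𝟙 ∈ R B`. That in turn makes `B ⊗ -` faithful, and a faithful exact `B ⊗ -` kills the third
map of the triangle on `coev` (since `B ⊗ coev` is split by a zig-zag), so `coev` splits.
-/

open MonoidalCategory

section Monoidal

variable {C : Type*} [Category C] [MonoidalCategory C]

def retractsOfMultiples (A : C) : Set C := {X | ∃ W : C, Nonempty (Retract X (A ⊗ W))}

lemma mem_retractsOfMultiples_of_retract {A X Y : C} (h : Retract X Y)
    (hY : Y ∈ retractsOfMultiples A) : X ∈ retractsOfMultiples A :=
  let ⟨W, ⟨h'⟩⟩ := hY; ⟨W, ⟨h.trans h'⟩⟩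

lemma mem_retractsOfMultiples_of_iso {A X Y : C} (e : X ≅ Y)
    (hY : Y ∈ retractsOfMultiples A) : X ∈ retractsOfMultiples A :=
  mem_retractsOfMultiples_of_retract (Retract.ofIso e) hY

lemma tensor_mem_retractsOfMultiples (A W : C) : A ⊗ W ∈ retractsOfMultiples A :=
  ⟨W, ⟨Retract.refl _⟩⟩

lemma self_mem_retractsOfMultiples (A : C) : A ∈ retractsOfMultiples A :=
  ⟨𝟙_ C, ⟨Retract.ofIso (ρ_ A).symm⟩⟩

lemma retractsOfMultiples_subset {A A' : C} (h : A ∈ retractsOfMultiples A') :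
    retractsOfMultiples A ⊆ retractsOfMultiples A' := by
  rintro X ⟨W, ⟨hX⟩⟩
  obtain ⟨W', ⟨hA⟩⟩ := h
  exact ⟨W' ⊗ W, ⟨hX.trans ((hA.map (tensorRight W)).trans (Retract.ofIso (α_ A' W' W)))⟩⟩

lemma retractsOfMultiples_eq {A A' : C} (h : A ∈ retractsOfMultiples A')
    (h' : A' ∈ retractsOfMultiples A) : retractsOfMultiples A = retractsOfMultiples A' :=
  (retractsOfMultiples_subset h).antisymm (retractsOfMultiples_subset h')

lemma mem_retractsOfMultiples_of_unit_mem {A : C} (h : 𝟙_ C ∈ retractsOfMultiples A) (X : C) :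
    X ∈ retractsOfMultiples A := by
  obtain ⟨W, ⟨hU⟩⟩ := h
  exact ⟨W ⊗ X, ⟨((Retract.ofIso (λ_ X).symm).trans (hU.map (tensorRight X))).trans
    (Retract.ofIso (α_ A W X))⟩⟩

lemma whiskerLeft_mem_retractsOfMultiples {A X : C} (V : C) (h : X ∈ retractsOfMultiples A) :
    V ⊗ X ∈ retractsOfMultiples (V ⊗ A) := by
  obtain ⟨W, ⟨hX⟩⟩ := h
  exact ⟨W, ⟨(hX.map (tensorLeft V)).trans (Retract.ofIso (α_ V A W).symm)⟩⟩

lemma whiskerLeft_eq_zero_of_retract [Preadditive C] {X Q : C} (h : Retract X Q) {Y Z : C}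
    {f : Y ⟶ Z} (hf : Q ◁ f = 0) : X ◁ f = 0 := by
  have hexch : X ◁ f ≫ h.i ▷ Z = h.i ▷ Y ≫ Q ◁ f := whisker_exchange h.i f
  calc X ◁ f = X ◁ f ≫ h.i ▷ Z ≫ h.r ▷ Z := by
        rw [← comp_whiskerRight, h.retract, id_whiskerRight, Category.comp_id]
    _ = 0 := by rw [reassoc_of% hexch, hf, zero_comp, comp_zero]

lemma unit_mem_retractsOfMultiples_of_isSplitMono_coev (B : C) [HasRightDual B]
    [IsSplitMono (η_ B Bᘁ)] : 𝟙_ C ∈ retractsOfMultiples B :=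
  ⟨Bᘁ, ⟨⟨η_ B Bᘁ, retraction _, IsSplitMono.id _⟩⟩⟩

lemma mem_retractsOfMultiples_coev (B : C) [HasRightDual B] :
    B ∈ retractsOfMultiples (B ⊗ Bᘁ) :=
  ⟨B, ⟨⟨(λ_ B).inv ≫ η_ B Bᘁ ▷ B, (α_ _ _ _).hom ≫ B ◁ ε_ B Bᘁ ≫ (ρ_ B).hom, by simp⟩⟩⟩

lemma dual_mem_retractsOfMultiples_ev (B : C) [HasRightDual B] :
    Bᘁ ∈ retractsOfMultiples (Bᘁ ⊗ B) :=
  ⟨Bᘁ, ⟨⟨(ρ_ _).inv ≫ Bᘁ ◁ η_ B Bᘁ ≫ (α_ _ _ _).inv, ε_ B Bᘁ ▷ Bᘁ ≫ (λ_ _).hom, by simp⟩⟩⟩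

variable [BraidedCategory C]

lemma whiskerRight_mem_retractsOfMultiples {A X : C} (V : C) (h : X ∈ retractsOfMultiples A) :
    X ⊗ V ∈ retractsOfMultiples (A ⊗ V) := by
  obtain ⟨W, ⟨hX⟩⟩ := h
  refine ⟨W, ⟨(hX.map (tensorRight V)).trans (Retract.ofIso ?_)⟩⟩
  exact α_ A W V ≪≫ whiskerLeftIso A (β_ W V) ≪≫ (α_ A V W).symm

lemma tensor_mem_retractsOfMultiples_tensor {A A' X X' : C} (h : X ∈ retractsOfMultiples A)
    (h' : X' ∈ retractsOfMultiples A') : X ⊗ X' ∈ retractsOfMultiples (A ⊗ A') :=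
  retractsOfMultiples_subset (whiskerRight_mem_retractsOfMultiples A' h)
    (whiskerLeft_mem_retractsOfMultiples X h')

lemma whiskerLeft_eq_zero_of_mem [Preadditive C] [MonoidalPreadditive C] {A X : C}
    (hX : X ∈ retractsOfMultiples A) {Y Z : C} {f : Y ⟶ Z} (hf : A ◁ f = 0) : X ◁ f = 0 := by
  obtain ⟨W, ⟨h⟩⟩ := hX
  refine whiskerLeft_eq_zero_of_retract (h.trans (Retract.ofIso (β_ A W))) ?_
  simp [hf]

lemma eq_zero_of_unit_mem [Preadditive C] [MonoidalPreadditive C] {A : C}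
    (h : 𝟙_ C ∈ retractsOfMultiples A) {Y Z : C} {f : Y ⟶ Z} (hf : A ◁ f = 0) : f = 0 := by
  simpa using whiskerLeft_eq_zero_of_mem h hf

lemma retractsOfMultiples_dual (B : C) [HasRightDual B] :
    retractsOfMultiples Bᘁ = retractsOfMultiples B :=
  retractsOfMultiples_eq
    (retractsOfMultiples_subset (mem_retractsOfMultiples_of_iso (β_ Bᘁ B)
      (tensor_mem_retractsOfMultiples B Bᘁ)) (dual_mem_retractsOfMultiples_ev B))
    (retractsOfMultiples_subset (mem_retractsOfMultiples_of_iso (β_ B Bᘁ)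
      (tensor_mem_retractsOfMultiples Bᘁ B)) (mem_retractsOfMultiples_coev B))

end Monoidal

section Rigid

variable {C : Type*} [Category C] [MonoidalCategory C] [BraidedCategory C] (B : C) [HasRightDual B]

lemma dual_mem_retractsOfMultiples : Bᘁ ∈ retractsOfMultiples B :=
  retractsOfMultiples_dual B ▸ self_mem_retractsOfMultiples Bᘁ

lemma mem_retractsOfMultiples_dual : B ∈ retractsOfMultiples Bᘁ :=
  (retractsOfMultiples_dual B).symm ▸ self_mem_retractsOfMultiples B

lemma mem_retractsOfMultiples_tensor_of_rigid {A A' : C} (h : B ∈ retractsOfMultiples A)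
    (h' : B ∈ retractsOfMultiples A') : B ∈ retractsOfMultiples (A ⊗ A') :=
  retractsOfMultiples_subset (tensor_mem_retractsOfMultiples_tensor h
    (retractsOfMultiples_subset h' (dual_mem_retractsOfMultiples B)))
    (mem_retractsOfMultiples_coev B)

lemma mem_retractsOfMultiples_tpow {A : C} (h : B ∈ retractsOfMultiples A) :
    ∀ n, B ∈ retractsOfMultiples (tpow A n)
  | 0 => mem_retractsOfMultiples_of_iso (λ_ B).symm (tensor_mem_retractsOfMultiples _ B)
  | n + 1 => mem_retractsOfMultiples_tensor_of_rigid B h (mem_retractsOfMultiples_tpow h n)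

lemma retractsOfMultiples_tpow_tensor_tpow {m : ℕ} (hm : 0 < m) (n : ℕ) :
    retractsOfMultiples (tpow B m ⊗ tpow Bᘁ n) = retractsOfMultiples B := by
  obtain ⟨k, rfl⟩ := Nat.exists_eq_add_of_lt hm
  exact retractsOfMultiples_eq
    (mem_retractsOfMultiples_of_iso (α_ _ _ _) (tensor_mem_retractsOfMultiples B _))
    (mem_retractsOfMultiples_tensor_of_rigid B
      (mem_retractsOfMultiples_tpow B (self_mem_retractsOfMultiples B) _)
      (mem_retractsOfMultiples_tpow B (mem_retractsOfMultiples_dual B) n))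

lemma isSplitMono_whiskerLeft_coev : IsSplitMono (B ◁ η_ B Bᘁ) :=
  ⟨⟨⟨(β_ B (B ⊗ Bᘁ)).hom ≫ (α_ _ _ _).hom ≫ B ◁ ε_ B Bᘁ ≫ (ρ_ B).hom ≫ (λ_ B).inv ≫
    (β_ B (𝟙_ C)).inv, by
      rw [BraidedCategory.braiding_naturality_right_assoc,
        reassoc_of% (ExactPairing.evaluation_coevaluation B Bᘁ)]
      simp⟩⟩⟩

end Rigid

section Additive

variable {C : Type*} [Category C] [Preadditive C]

lemma Functor.faithful_iff_map_eq_zero {D : Type*} [Category D] [Preadditive D] (F : C ⥤ D)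
    [F.Additive] : F.Faithful ↔ ∀ {X Y : C} (f : X ⟶ Y), F.map f = 0 → f = 0 := by
  refine ⟨fun _ X Y f hf => F.map_injective (by rw [hf, F.map_zero]), fun h => ⟨?_⟩⟩
  intro X Y f g hfg
  exact sub_eq_zero.mp (h _ (by rw [F.map_sub, hfg, sub_self]))

variable [MonoidalCategory C]

lemma isZero_mem_retractsOfMultiples (A : C) {X : C} (hX : IsZero X) :
    X ∈ retractsOfMultiples A :=
  ⟨X, ⟨⟨0, 0, hX.eq_of_src _ _⟩⟩⟩

lemma biprod_mem_retractsOfMultiples [HasBinaryBiproducts C] [MonoidalPreadditive C] {A X Y : C}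
    (hX : X ∈ retractsOfMultiples A) (hY : Y ∈ retractsOfMultiples A) :
    (X ⊞ Y : C) ∈ retractsOfMultiples A := by
  obtain ⟨W, ⟨h⟩⟩ := hX
  obtain ⟨W', ⟨h'⟩⟩ := hY
  have := preservesBinaryBiproducts_of_preservesBiproducts (tensorLeft A)
  have hsum : Retract (X ⊞ Y) ((A ⊗ W) ⊞ (A ⊗ W')) :=
    ⟨biprod.map h.i h'.i, biprod.map h.r h'.r, by ext <;> simp⟩
  exact ⟨W ⊞ W', ⟨hsum.trans (Retract.ofIso ((tensorLeft A).mapBiprod W W').symm)⟩⟩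

end Additive

section Triangulated

lemma isSplitMono_mor₁_of_mor₃_eq_zero {T : Triangle K} (hT : T ∈ distTriang K)
    (h : T.mor₃ = 0) : IsSplitMono T.mor₁ := by
  obtain ⟨e, he, -⟩ := exists_iso_binaryBiproduct_of_distTriang T hT h
  exact ⟨⟨⟨e.hom ≫ biprod.fst, by simp [reassoc_of% he]⟩⟩⟩

lemma addClosure_of_retract [HasBinaryBiproducts K] {A : Set K} {X Q : K} (h : Retract X Q)
    (hQ : Q ∈ A) : AddClosure A X := by
  obtain ⟨C, g, δ, hT⟩ := distinguished_cocone_triangle h.i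
  have hδ : δ = 0 := (Triangle.mk h.i g δ).mor₃_eq_zero_of_mono₁ hT (inferInstanceAs (Mono h.i))
  obtain ⟨e, -⟩ := exists_iso_binaryBiproduct_of_distTriang _ hT hδ
  exact AddClosure.summand X C Q (AddClosure.of Q hQ) e.symm

variable [MonoidalCategory K]

lemma exists_distinguished_whiskerLeft (htt : TensorTriangulatedOn K) (W : K) {T : Triangle K}
    (hT : T ∈ distTriang K) : ∃ δ : W ⊗ T.obj₃ ⟶ (W ⊗ T.obj₁)⟦(1 : ℤ)⟧,
      Triangle.mk (W ◁ T.mor₁) (W ◁ T.mor₂) δ ∈ distTriang K ∧ (δ = 0 ↔ W ◁ T.mor₃ = 0) := by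
  obtain ⟨cL, -, hL, -⟩ := htt
  exact ⟨_, hL W T hT, Preadditive.IsIso.comp_right_eq_zero _ _⟩

lemma addClosure_tensMultiples_iff [HasBinaryBiproducts K] [MonoidalPreadditive K] (A X : K) :
    AddClosure (tensMultiples A) X ↔ X ∈ retractsOfMultiples A := by
  constructor
  · intro hX
    induction hX with
    | of X hX =>
      obtain ⟨Z, ⟨e⟩⟩ := hX
      exact mem_retractsOfMultiples_of_iso e (tensor_mem_retractsOfMultiples A Z)
    | zero X hX => exact isZero_mem_retractsOfMultiples A hX
    | sum X Y _ _ ihX ihY => exact biprod_mem_retractsOfMultiples ihX ihY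
    | summand X Y Z _ e ih =>
      exact mem_retractsOfMultiples_of_retract
        ((Retract.mk biprod.inl biprod.fst (by simp)).trans (Retract.ofIso e)) ih
    | isoClosed X Y _ e ih => exact mem_retractsOfMultiples_of_iso e.symm ih
  · rintro ⟨W, ⟨h⟩⟩
    exact addClosure_of_retract h ⟨W, ⟨Iso.refl _⟩⟩

lemma isSplitMono_of_isSplitMono_whiskerLeft (htt : TensorTriangulatedOn K) {W : K}
    (hW : ∀ {X Y : K} (f : X ⟶ Y), W ◁ f = 0 → f = 0) {X Y : K} {f : X ⟶ Y}
    [IsSplitMono (W ◁ f)] : IsSplitMono f := by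
  obtain ⟨Z, g, h, hT⟩ := distinguished_cocone_triangle f
  obtain ⟨δ, hTW, hδ⟩ := exists_distinguished_whiskerLeft htt W hT
  have hδ₀ : δ = 0 :=
    (Triangle.mk _ _ δ).mor₃_eq_zero_of_mono₁ hTW (inferInstanceAs (Mono (W ◁ f)))
  exact isSplitMono_mor₁_of_mor₃_eq_zero hT (hW h (hδ.1 hδ₀))

end Triangulated

section Projectives

lemma eProjective_of_adjunction {F G : K ⥤ K} (adj : F ⊣ G) [G.PreservesZeroMorphisms]
    {E : Set (Triangle K)}
    (hE : ∀ T ∈ E, Triangle.mk (G.map T.mor₁) (G.map T.mor₂) 0 ∈ distTriang K) (W : K) :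
    EProjective E (F.obj W) := by
  intro T hT
  have hGT := hE T hT
  have hzero : ∀ Z : K, adj.homEquiv W Z 0 = 0 := fun Z => by
    simp [Adjunction.homEquiv_unit]
  refine ⟨fun a ha => ?_, fun b hb => ?_, fun c => ?_⟩
  · have hmono : Mono (G.map T.mor₁) := Triangle.mono₁ _ hGT rfl
    apply (adj.homEquiv _ _).injective
    rw [hzero, ← cancel_mono (G.map T.mor₁), ← adj.homEquiv_naturality_right, ha, hzero,
      zero_comp]
  · obtain ⟨a, ha⟩ : ∃ a : W ⟶ G.obj T.obj₁, adj.homEquiv _ _ b = a ≫ G.map T.mor₁ :=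
      Triangle.coyoneda_exact₂ _ hGT _ (by
        change adj.homEquiv _ _ b ≫ G.map T.mor₂ = 0
        rw [← adj.homEquiv_naturality_right, hb, hzero])
    exact ⟨(adj.homEquiv _ _).symm a, by
      rw [← adj.homEquiv_naturality_right_symm, ← ha, Equiv.symm_apply_apply]⟩
  · obtain ⟨b, hb⟩ : ∃ b : W ⟶ G.obj T.obj₂, adj.homEquiv _ _ c = b ≫ G.map T.mor₂ :=
      Triangle.coyoneda_exact₃ _ hGT _ comp_zero
    exact ⟨(adj.homEquiv _ _).symm b, by
      rw [← adj.homEquiv_naturality_right_symm, ← hb, Equiv.symm_apply_apply]⟩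

variable [MonoidalCategory K] (B : K) [HasRightDual B]

lemma eProjective_dual_tensor [MonoidalPreadditive K] (htt : TensorTriangulatedOn K) (W : K) :
    EProjective (BSplit B) (Bᘁ ⊗ W) := by
  refine eProjective_of_adjunction (tensorLeftAdjunction B Bᘁ) (fun T hT => ?_) W
  obtain ⟨hT, hT₃⟩ := hT
  obtain ⟨δ, hTB, hδ⟩ := exists_distinguished_whiskerLeft htt B hT
  obtain rfl := hδ.2 hT₃
  exact hTB

lemma mem_retractsOfMultiples_dual_of_eProjective (htt : TensorTriangulatedOn K) {P : K}
    (hP : EProjective (BSplit B) P) : P ∈ retractsOfMultiples Bᘁ := by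
  let ε := (tensorLeftAdjunction B Bᘁ).counit.app P
  obtain ⟨X, w, v, hT⟩ := distinguished_cocone_triangle₁ ε
  obtain ⟨δ, hTB, hδ⟩ := exists_distinguished_whiskerLeft htt B hT
  have : IsSplitEpi (B ◁ ε) :=
    ⟨⟨⟨(tensorLeftAdjunction B Bᘁ).unit.app (B ⊗ P),
      (tensorLeftAdjunction B Bᘁ).right_triangle_components P⟩⟩⟩
  have hv : B ◁ v = 0 := hδ.1 ((Triangle.mk _ _ δ).mor₃_eq_zero_of_epi₂ hTB
    (inferInstanceAs (Epi (B ◁ ε))))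
  obtain ⟨s, hs⟩ := (hP _ ⟨hT, hv⟩).2.2 (𝟙 P)
  exact ⟨B ⊗ P, ⟨⟨s, ε, hs⟩⟩⟩

end Projectives

section StableCategory

variable [MonoidalCategory K] [BraidedCategory K] [MonoidalPreadditive K] (B : K) [HasRightDual B]

lemma factorsThroughProj_id_iff (htt : TensorTriangulatedOn K) (X : K) :
    FactorsThroughProj (BSplit B) (𝟙 X) ↔ X ∈ retractsOfMultiples B := by
  rw [← retractsOfMultiples_dual B]
  constructor
  · rintro ⟨P, a, b, hP, hab⟩
    exact mem_retractsOfMultiples_of_retract ⟨a, b, hab⟩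
      (mem_retractsOfMultiples_dual_of_eProjective B htt hP)
  · rintro ⟨W, ⟨h⟩⟩
    exact ⟨_, h.i, h.r, eProjective_dual_tensor B htt W, h.retract⟩

lemma StableModel.isZero_π_obj_iff (htt : TensorTriangulatedOn K) (D : StableModel (BSplit B))
    (X : K) : IsZero (D.π.obj X) ↔ X ∈ retractsOfMultiples B := by
  rw [IsZero.iff_id_eq_zero, ← D.π.map_id, D.π_map_zero_iff, factorsThroughProj_id_iff B htt]

lemma StableModel.isZero_iff_unit_mem (htt : TensorTriangulatedOn K)
    (D : StableModel (BSplit B)) : (∀ X : D.S, IsZero X) ↔ 𝟙_ K ∈ retractsOfMultiples B := by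
  refine ⟨fun h => (D.isZero_π_obj_iff B htt _).1 (h _), fun h X => ?_⟩
  have := D.π_essSurj
  exact ((D.isZero_π_obj_iff B htt _).2 (mem_retractsOfMultiples_of_unit_mem h _)).of_iso
    (D.π.objObjPreimageIso X).symm

end StableCategory

open MonoidalCategory in
/-- Proposition 7.14: (a) `B ⊗ -` is faithful iff the coevaluation `1 ⟶ B ⊗ B^∨` is a
split monomorphism, iff the relative stable category `S(K;B)` vanishes; (b) `B`, `B^∨`
and all `B^(⊗m) ⊗ (B^∨)^(⊗n)` for `m, n > 0` define the same relative stable category,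
i.e. the same additive closure of tensor multiples. -/
theorem statement17 {K : Type u} [Category.{v} K] [Preadditive K] [HasZeroObject K]
    [HasShift K ℤ] [∀ n : ℤ, (shiftFunctor K n).Additive] [Pretriangulated K]
    [HasBinaryBiproducts K] [MonoidalCategory K] [SymmetricCategory K] [MonoidalPreadditive K]
    (htt : TensorTriangulatedOn K)
    (B : K) [HasRightDual B]
    (D : StableModel (BSplit B)) :
    ((tensorLeft B).Faithful ↔ IsSplitMono (ExactPairing.coevaluation B (Bᘁ))) ∧
    (IsSplitMono (ExactPairing.coevaluation B (Bᘁ)) ↔ ∀ X : D.S, IsZero X) ∧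
    (∀ X : K, AddClosure (tensMultiples B) X ↔ AddClosure (tensMultiples (Bᘁ)) X) ∧
    (∀ m n : ℕ, 0 < m → 0 < n → ∀ X : K,
      AddClosure (tensMultiples (tpow B m ⊗ tpow (Bᘁ) n)) X ↔
        AddClosure (tensMultiples B) X) := by
  have hunit : IsSplitMono (η_ B Bᘁ) → 𝟙_ K ∈ retractsOfMultiples B :=
    fun _ => unit_mem_retractsOfMultiples_of_isSplitMono_coev B
  have hfaithful : 𝟙_ K ∈ retractsOfMultiples B →
      ∀ {X Y : K} (f : X ⟶ Y), (tensorLeft B).map f = 0 → f = 0 :=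
    fun h _ _ _ hf => eq_zero_of_unit_mem h hf
  have hsplit : (∀ {X Y : K} (f : X ⟶ Y), (tensorLeft B).map f = 0 → f = 0) →
      IsSplitMono (η_ B Bᘁ) := fun h =>
    have := isSplitMono_whiskerLeft_coev B
    isSplitMono_of_isSplitMono_whiskerLeft htt h
  refine ⟨?_, ?_, fun X => ?_, fun m n hm _ X => ?_⟩
  · rw [Functor.faithful_iff_map_eq_zero]
    exact ⟨hsplit, fun h => hfaithful (hunit h)⟩
  · rw [D.isZero_iff_unit_mem B htt]
    exact ⟨hunit, fun h => hsplit (hfaithful h)⟩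
  · rw [addClosure_tensMultiples_iff, addClosure_tensMultiples_iff, retractsOfMultiples_dual]
  · rw [addClosure_tensMultiples_iff, addClosure_tensMultiples_iff,
      retractsOfMultiples_tpow_tensor_tpow B hm]

end RelStable
end
end
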